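/- arXiv:1411.7670 — 8 statements merged into one kernel-verified Lean document; each statement's English description precedes it below -/
import Mathlib

section
/- Let w_b be the solution on [0,b] of r w = (μ - α((1-x)^+))w' + (σ²/2)w'' with terminal conditions w'(b) = 1 and w''(b) = 0, where b > 1. If w_b(0) = 0, then w_b' > 0 on (0,b), i.e., w_b is strictly increasing on [0,b]. -/
/-!
At an interior critical point of `w` the equation reads `σ²/2 · w'' = r · w`, so `w''` has the
sign of `w`. Hence `w` has no interior minimum with `w < 0`, and none with `w = 0` either: there
`w = w' = 0`, and uniqueness for the linear equation would force `w ≡ 0` up to `b`, against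
`w'(b) = 1`. As `w(0) = 0 < μ / r = w(b)`, this gives `w > 0` on `(0, b)`. Then `w'' > 0` at every
interior critical point, so `w` has no interior local maximum; starting from `w(0) = 0` it can
therefore never turn downwards.
-/

open Set Filter Topology

theorem deriv_deriv_eq_zero_of_isLocalMin_of_isLocalMax {f : ℝ → ℝ} {x : ℝ}
    (hmin : IsLocalMin f x) (hmax : IsLocalMax f x) : deriv (deriv f) x = 0 := by
  have hconst : f =ᶠ[𝓝 x] fun _ => f x :=
    (hmin.and hmax).mono fun _ hy => le_antisymm hy.2 hy.1
  simp [hconst.deriv.deriv_eq]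

theorem IsLocalMin.deriv_deriv_nonneg {f : ℝ → ℝ} {x : ℝ} (h : IsLocalMin f x)
    (hc : ContinuousAt f x) : 0 ≤ deriv (deriv f) x := by
  by_contra! hneg
  exact hneg.ne <| deriv_deriv_eq_zero_of_isLocalMin_of_isLocalMax h
    (isLocalMax_of_deriv_deriv_neg hneg h.deriv_eq_zero hc)

theorem IsLocalMax.deriv_deriv_nonpos {f : ℝ → ℝ} {x : ℝ} (h : IsLocalMax f x)
    (hc : ContinuousAt f x) : deriv (deriv f) x ≤ 0 := by
  by_contra! hpos
  exact hpos.ne' <| deriv_deriv_eq_zero_of_isLocalMin_of_isLocalMax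
    (isLocalMin_of_deriv_deriv_pos hpos h.deriv_eq_zero hc) h

theorem exists_mem_Ioo_lt_of_deriv_pos {f : ℝ → ℝ} {a x : ℝ} (hf : 0 < deriv f x) (ha : a < x) :
    ∃ y ∈ Ioo a x, f y < f x := by
  have hsign := eventually_nhdsWithin_sign_eq_of_deriv_pos (f := fun y => f y - f x) (x₀ := x)
    (by simpa using hf) (by simp)
  obtain ⟨y, hsy, hy⟩ :=
    ((hsign.filter_mono nhdsWithin_le_nhds).and (Ioo_mem_nhdsLT ha) : ∀ᶠ y in 𝓝[<] x, _).exists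
  refine ⟨y, hy, ?_⟩
  rw [sign_neg (sub_neg.mpr hy.2), sign_eq_neg_one_iff, sub_neg] at hsy
  exact hsy

theorem exists_mem_Ioo_gt_of_deriv_neg {f : ℝ → ℝ} {a x : ℝ} (hf : deriv f x < 0) (ha : a < x) :
    ∃ y ∈ Ioo a x, f x < f y := by
  simpa using exists_mem_Ioo_lt_of_deriv_pos (f := fun y => -f y) (by simpa using hf) ha

theorem pos_on_Ioo_of_isLocalMin_pos {f : ℝ → ℝ} {a b : ℝ} (hf : ContinuousOn f (Icc a b))
    (ha : 0 ≤ f a) (hb : 0 ≤ f b) (hmin : ∀ c ∈ Ioo a b, IsLocalMin f c → 0 < f c) :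
    ∀ x ∈ Ioo a b, 0 < f x := by
  intro x hx
  by_contra! hx0
  obtain ⟨m, hm, hmin_m⟩ := isCompact_Icc.exists_isMinOn (nonempty_Icc.mpr (hx.1.trans hx.2).le) hf
  obtain ⟨c, hc, hc_min, hc0⟩ : ∃ c ∈ Ioo a b, IsMinOn f (Icc a b) c ∧ f c ≤ 0 := by
    rcases lt_or_ge (f m) (f x) with hlt | hle
    · have hma : m ≠ a := fun h => by linarith [h ▸ hlt]
      have hmb : m ≠ b := fun h => by linarith [h ▸ hlt]
      exact ⟨m, ⟨lt_of_le_of_ne hm.1 hma.symm, lt_of_le_of_ne hm.2 hmb⟩, hmin_m, by linarith⟩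
    · exact ⟨x, hx, fun y hy => hle.trans (hmin_m hy), hx0⟩
  exact hc0.not_gt (hmin c hc (hc_min.isLocalMin (Icc_mem_nhds hc.1 hc.2)))

theorem deriv_pos_on_Ioo_of_deriv_deriv_pos {f : ℝ → ℝ} {a b : ℝ} (hf : Continuous f)
    (hpos : ∀ x ∈ Ioo a b, f a < f x)
    (hcrit : ∀ c ∈ Ioo a b, deriv f c = 0 → 0 < deriv (deriv f) c) :
    ∀ x ∈ Ioo a b, 0 < deriv f x := by
  intro x hx
  by_contra! hx0
  obtain ⟨x', hx', hx'neg⟩ : ∃ x' ∈ Ioo a b, deriv f x' < 0 := by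
    rcases hx0.lt_or_eq with hlt | heq
    · exact ⟨x, hx, hlt⟩
    · obtain ⟨y, hy, hlt⟩ := exists_mem_Ioo_lt_of_deriv_pos (hcrit x hx heq) hx.1
      exact ⟨y, ⟨hy.1, hy.2.trans hx.2⟩, heq ▸ hlt⟩
  obtain ⟨m, hm, hmax⟩ :=
    (isCompact_Icc (a := a) (b := x')).exists_isMaxOn (nonempty_Icc.mpr hx'.1.le) hf.continuousOn
  have hma : m ≠ a := fun h => (hpos x' hx').not_ge (h ▸ hmax (right_mem_Icc.mpr hx'.1.le))
  have hmx' : m ≠ x' := by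
    obtain ⟨y, hy, hlt⟩ := exists_mem_Ioo_gt_of_deriv_neg hx'neg hx'.1
    exact fun h => hlt.not_ge (h ▸ hmax ⟨hy.1.le, hy.2.le⟩)
  have hm' : m ∈ Ioo a x' := ⟨lt_of_le_of_ne hm.1 hma.symm, lt_of_le_of_ne hm.2 hmx'⟩
  have hloc : IsLocalMax f m := hmax.isLocalMax (Icc_mem_nhds hm'.1 hm'.2)
  exact (hloc.deriv_deriv_nonpos hf.continuousAt).not_gt
    (hcrit m ⟨hm'.1, hm'.2.trans hx'.2⟩ hloc.deriv_eq_zero)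

theorem eq_zero_of_deriv_deriv_eq_linear_of_eq_zero {w p q : ℝ → ℝ} {a b : ℝ}
    (hw : Differentiable ℝ w) (hw' : Differentiable ℝ (deriv w))
    (hp : ContinuousOn p (Icc a b)) (hq : ContinuousOn q (Icc a b))
    (hode : ∀ x ∈ Icc a b, deriv (deriv w) x = p x * w x + q x * deriv w x)
    (ha : w a = 0) (ha' : deriv w a = 0) :
    ∀ x ∈ Icc a b, w x = 0 ∧ deriv w x = 0 := by
  obtain ⟨P, hP⟩ := isCompact_Icc.exists_bound_of_continuousOn hp
  obtain ⟨Q, hQ⟩ := isCompact_Icc.exists_bound_of_continuousOn hq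
  have hzero := eq_zero_of_abs_deriv_le_mul_abs_self_of_eq_zero_right
    (f := fun x => (w x, deriv w x)) (f' := fun x => (deriv w x, deriv (deriv w) x))
    (K := 1 + P + Q) (a := a) (b := b) (hw.continuous.prodMk hw'.continuous).continuousOn
    (fun x _ => ((hw x).hasDerivAt.prodMk (hw' x).hasDerivAt).hasDerivWithinAt)
    (by simp [ha, ha']) ?bound
  · exact fun x hx => Prod.ext_iff.mp (hzero x hx)
  intro x hx
  have hPx := hP x (Ico_subset_Icc_self hx)
  have hQx := hQ x (Ico_subset_Icc_self hx)
  simp only [Prod.norm_def, Real.norm_eq_abs] at hPx hQx ⊢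
  set N := max |w x| |deriv w x|
  have hw_le : |w x| ≤ N := le_max_left _ _
  have hw'_le : |deriv w x| ≤ N := le_max_right _ _
  have hN : 0 ≤ N := (abs_nonneg _).trans hw_le
  have hP0 : 0 ≤ P := (abs_nonneg _).trans hPx
  have hQ0 : 0 ≤ Q := (abs_nonneg _).trans hQx
  refine max_le (by nlinarith) ?_
  calc |deriv (deriv w) x| = |p x * w x + q x * deriv w x| := by
        rw [hode x (Ico_subset_Icc_self hx)]
    _ ≤ |p x| * |w x| + |q x| * |deriv w x| := by
        rw [← abs_mul, ← abs_mul]; exact abs_add_le _ _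
    _ ≤ P * N + Q * N := by gcongr
    _ ≤ (1 + P + Q) * N := by linarith

theorem stmt_2_general (μ σ r : ℝ) (hσ : 0 < σ) (hr : 0 < r) (hμr : r < μ)
    (α : ℝ → ℝ) (hα : ContDiff ℝ 1 α) (hα0 : α 0 = 0)
    (b : ℝ) (hb : 1 < b) (w : ℝ → ℝ) (hw : ContDiff ℝ 2 w)
    (hode : ∀ x ∈ Icc (0:ℝ) b,
      r * w x = (μ - α (max (1 - x) 0)) * deriv w x + σ ^ 2 / 2 * deriv (deriv w) x)
    (hw'b : deriv w b = 1) (hw''b : deriv (deriv w) b = 0) (hw0 : w 0 = 0) :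
    (∀ x ∈ Ioo (0:ℝ) b, 0 < deriv w x) ∧ StrictMonoOn w (Icc 0 b) := by
  have hw₁ : Differentiable ℝ w := hw.differentiable (by norm_num)
  have hw₂ : Differentiable ℝ (deriv w) :=
    (contDiff_succ_iff_deriv.mp (by exact_mod_cast hw : ContDiff ℝ (1 + 1) w)).2.2.differentiable
      one_ne_zero
  have hwb : 0 < w b := by
    have h := hode b ⟨by linarith, le_rfl⟩
    rw [max_eq_right (by linarith), hα0, hw'b, hw''b] at h
    nlinarith
  have hcrit : ∀ c ∈ Icc 0 b, deriv w c = 0 → σ ^ 2 / 2 * deriv (deriv w) c = r * w c := by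
    intro c hc hc'
    simpa [hc'] using (hode c hc).symm
  have hlinear : ∀ x ∈ Icc 0 b, deriv (deriv w) x =
      2 * r / σ ^ 2 * w x + -2 * (μ - α (max (1 - x) 0)) / σ ^ 2 * deriv w x := by
    intro x hx
    field_simp
    linarith [hode x hx]
  have hmin : ∀ c ∈ Ioo 0 b, IsLocalMin w c → 0 < w c := by
    intro c hc hloc
    have hc' := hloc.deriv_eq_zero
    have hwc : 0 ≤ w c := by
      nlinarith [hcrit c (Ioo_subset_Icc_self hc) hc', hloc.deriv_deriv_nonneg (hw₁ c).continuousAt]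
    refine hwc.lt_of_ne fun hwc0 => ?_
    have hvanish := eq_zero_of_deriv_deriv_eq_linear_of_eq_zero hw₁ hw₂ continuousOn_const
      (by have := hα.continuous; fun_prop) (fun x hx => hlinear x ⟨hc.1.le.trans hx.1, hx.2⟩)
      hwc0.symm hc' b ⟨hc.2.le, le_rfl⟩
    exact one_ne_zero (hw'b ▸ hvanish.2)
  have hpos := pos_on_Ioo_of_isLocalMin_pos hw₁.continuous.continuousOn hw0.ge hwb.le hmin
  have hderiv : ∀ x ∈ Ioo 0 b, 0 < deriv w x := by
    refine deriv_pos_on_Ioo_of_deriv_deriv_pos hw₁.continuous (by rwa [hw0]) fun c hc hc' => ?_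
    nlinarith [hcrit c (Ioo_subset_Icc_self hc) hc', hpos c hc]
  refine ⟨hderiv, strictMonoOn_of_deriv_pos (convex_Icc 0 b) hw₁.continuous.continuousOn ?_⟩
  rwa [interior_Icc]

theorem stmt_2 (μ σ r : ℝ) (hσ : 0 < σ) (hr : 0 < r) (hμr : r < μ)
    (α : ℝ → ℝ) (hα : ContDiff ℝ 1 α) (hαconv : ConvexOn ℝ (Ici 0) α)
    (hαmono : StrictMonoOn α (Ici 0)) (hα0 : α 0 = 0)
    (hα' : ∀ x ≥ (0:ℝ), r ≤ deriv α x)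
    (b : ℝ) (hb : 1 < b) (w : ℝ → ℝ) (hw : ContDiff ℝ 2 w)
    (hode : ∀ x ∈ Icc (0:ℝ) b,
      r * w x = (μ - α (max (1 - x) 0)) * deriv w x + σ ^ 2 / 2 * deriv (deriv w) x)
    (hw'b : deriv w b = 1) (hw''b : deriv (deriv w) b = 0) (hw0 : w 0 = 0) :
    (∀ x ∈ Ioo (0:ℝ) b, 0 < deriv w x) ∧ StrictMonoOn w (Icc 0 b) :=
  stmt_2_general μ σ r hσ hr hμr α hα hα0 b hb w hw hode hw'b hw''b hw0
end

section
/- Let w_b be the solution on [0,b] of r w = (μ - α((1-x)^+))w' + (σ²/2)w'' with w'(b) = 1, w''(b) = 0 and b > 1. Assume w_b(0) = 0 (so that w_b is increasing and positive on (0,b)). Then w_b'(x) > 1 and w_b''(x) < 0 for all x in [1, b). -/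
/-!
On `[1, b]` the drift penalty vanishes and the equation becomes `c w'' = r w - μ w'` with
`c = σ²/2`. Multiplying `f = r w - μ w'` by the integrating factor `exp (μ x / c)` gives a
function with derivative `r exp (μ x / c) w'`, nonnegative because `w` is increasing. Since
`f b = c w''(b) = 0`, monotonicity forces `f ≤ 0`, i.e. `w'' ≤ 0`, on `[1, b]`; hence
`w' ≥ w'(b) = 1` there. Now the derivative of the integrating-factor function is strictly
positive, so `w'' < 0` on `[1, b)`, and `w'` is strictly decreasing down to `w'(b) = 1`.
-/

open Set Real

section LinearSecondOrderODE

variable {w : ℝ → ℝ} {r μ c a b : ℝ}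

lemma hasDerivAt_exp_mul_of_ode {x : ℝ} (hc : c ≠ 0) (hw : DifferentiableAt ℝ w x)
    (hw' : DifferentiableAt ℝ (deriv w) x)
    (hode : c * deriv (deriv w) x = r * w x - μ * deriv w x) :
    HasDerivAt (fun y => exp (μ / c * y) * (r * w y - μ * deriv w y))
      (exp (μ / c * x) * (r * deriv w x)) x := by
  have hexp : HasDerivAt (fun y => exp (μ / c * y)) (exp (μ / c * x) * (μ / c)) x := by
    simpa using ((hasDerivAt_id x).const_mul (μ / c)).exp
  refine (hexp.mul ((hw.hasDerivAt.const_mul r).sub (hw'.hasDerivAt.const_mul μ))).congr_deriv ?_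
  simp only [Pi.sub_apply, ← hode]
  field_simp
  ring

lemma deriv_deriv_nonpos_of_ode (hw : Differentiable ℝ w) (hw' : Differentiable ℝ (deriv w))
    (hc : 0 < c) (hode : ∀ x ∈ Icc a b, c * deriv (deriv w) x = r * w x - μ * deriv w x)
    (hw''b : deriv (deriv w) b = 0) (hr : 0 ≤ r) (hw'nonneg : ∀ x ∈ Ioo a b, 0 ≤ deriv w x) :
    ∀ x ∈ Icc a b, deriv (deriv w) x ≤ 0 := by
  set g := fun y => exp (μ / c * y) * (r * w y - μ * deriv w y)
  have hg : ∀ x ∈ Icc a b, HasDerivAt g (exp (μ / c * x) * (r * deriv w x)) x := fun x hx =>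
    hasDerivAt_exp_mul_of_ode hc.ne' (hw x) (hw' x) (hode x hx)
  have hgmono : MonotoneOn g (Icc a b) := by
    refine monotoneOn_of_deriv_nonneg (convex_Icc a b)
      (fun x hx => (hg x hx).continuousAt.continuousWithinAt)
      (fun x hx => (hg x (interior_subset hx)).differentiableAt.differentiableWithinAt) ?_
    intro x hx
    rw [interior_Icc] at hx
    rw [(hg x (Ioo_subset_Icc_self hx)).deriv]
    have := hw'nonneg x hx
    positivity
  intro x hx
  have hgb : g x ≤ g b := hgmono hx (right_mem_Icc.mpr (hx.1.trans hx.2)) hx.2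
  simp only [g, ← hode x hx, ← hode b (right_mem_Icc.mpr (hx.1.trans hx.2)), hw''b,
    mul_zero] at hgb
  exact nonpos_of_mul_nonpos_right (nonpos_of_mul_nonpos_right hgb (exp_pos _)) hc

lemma deriv_deriv_neg_of_ode (hw : Differentiable ℝ w) (hw' : Differentiable ℝ (deriv w))
    (hc : 0 < c) (hode : ∀ x ∈ Icc a b, c * deriv (deriv w) x = r * w x - μ * deriv w x)
    (hw''b : deriv (deriv w) b = 0) (hr : 0 < r) (hw'pos : ∀ x ∈ Ioo a b, 0 < deriv w x) :
    ∀ x ∈ Ico a b, deriv (deriv w) x < 0 := by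
  set g := fun y => exp (μ / c * y) * (r * w y - μ * deriv w y)
  have hg : ∀ x ∈ Icc a b, HasDerivAt g (exp (μ / c * x) * (r * deriv w x)) x := fun x hx =>
    hasDerivAt_exp_mul_of_ode hc.ne' (hw x) (hw' x) (hode x hx)
  have hgmono : StrictMonoOn g (Icc a b) := by
    refine strictMonoOn_of_deriv_pos (convex_Icc a b)
      (fun x hx => (hg x hx).continuousAt.continuousWithinAt) ?_
    intro x hx
    rw [interior_Icc] at hx
    rw [(hg x (Ioo_subset_Icc_self hx)).deriv]
    have := hw'pos x hx
    positivity
  intro x hx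
  have hbx : b ∈ Icc a b := right_mem_Icc.mpr (hx.1.trans hx.2.le)
  have hgb : g x < g b := hgmono (Ico_subset_Icc_self hx) hbx hx.2
  simp only [g, ← hode x (Ico_subset_Icc_self hx), ← hode b hbx, hw''b, mul_zero] at hgb
  by_contra! hnonneg
  exact hgb.not_ge (mul_nonneg (exp_pos _).le (mul_nonneg hc.le hnonneg))

end LinearSecondOrderODE

theorem stmt_3_general (μ σ r : ℝ) (hσ : 0 < σ) (hr : 0 < r)
    (α : ℝ → ℝ) (hα0 : α 0 = 0)
    (b : ℝ) (hb : 1 < b) (w : ℝ → ℝ) (hw : ContDiff ℝ 2 w)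
    (hode : ∀ x ∈ Icc (0:ℝ) b,
      r * w x = (μ - α (max (1 - x) 0)) * deriv w x + σ ^ 2 / 2 * deriv (deriv w) x)
    (hw'b : deriv w b = 1) (hw''b : deriv (deriv w) b = 0)
    (hmono : StrictMonoOn w (Icc 0 b)) :
    ∀ x ∈ Ico (1:ℝ) b, 1 < deriv w x ∧ deriv (deriv w) x < 0 := by
  obtain ⟨hwd, -, hw1⟩ := contDiff_succ_iff_deriv (n := 1).mp hw
  have hwd' : Differentiable ℝ (deriv w) := hw1.differentiable one_ne_zero
  have hc : 0 < σ ^ 2 / 2 := by positivity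
  have hode1 : ∀ x ∈ Icc 1 b, σ ^ 2 / 2 * deriv (deriv w) x = r * w x - μ * deriv w x := by
    intro x hx
    have h := hode x ⟨by linarith [hx.1], hx.2⟩
    rw [max_eq_right (by linarith [hx.1]), hα0] at h
    linarith
  have hw'nonneg : ∀ x ∈ Ioo 1 b, 0 ≤ deriv w x := fun x hx => by
    rw [← derivWithin_of_isOpen isOpen_Ioo hx]
    exact (hmono.monotoneOn.mono fun y hy => ⟨by linarith [hy.1], hy.2.le⟩).derivWithin_nonneg
  have hw''nonpos := deriv_deriv_nonpos_of_ode hwd hwd' hc hode1 hw''b hr.le hw'nonneg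
  have hw'anti : AntitoneOn (deriv w) (Icc 1 b) :=
    antitoneOn_of_deriv_nonpos (convex_Icc 1 b) hwd'.continuous.continuousOn
      hwd'.differentiableOn fun x hx => hw''nonpos x (interior_subset hx)
  have hw''neg := deriv_deriv_neg_of_ode hwd hwd' hc hode1 hw''b hr fun x hx => by
    linarith [hw'anti (Ioo_subset_Icc_self hx) (right_mem_Icc.mpr hb.le) hx.2.le]
  intro x hx
  have hw'santi : StrictAntiOn (deriv w) (Icc x b) :=
    strictAntiOn_of_deriv_neg (convex_Icc x b) hwd'.continuous.continuousOn fun y hy => by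
      rw [interior_Icc] at hy
      exact hw''neg y ⟨hx.1.trans hy.1.le, hy.2⟩
  refine ⟨?_, hw''neg x hx⟩
  rw [← hw'b]
  exact hw'santi (left_mem_Icc.mpr hx.2.le) (right_mem_Icc.mpr hx.2.le) hx.2

theorem stmt_3 (μ σ r : ℝ) (hσ : 0 < σ) (hr : 0 < r) (hμr : r < μ)
    (α : ℝ → ℝ) (hα : ContDiff ℝ 1 α) (hαconv : ConvexOn ℝ (Ici 0) α)
    (hαmono : StrictMonoOn α (Ici 0)) (hα0 : α 0 = 0)
    (hα' : ∀ x ≥ (0:ℝ), r ≤ deriv α x)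
    (b : ℝ) (hb : 1 < b) (w : ℝ → ℝ) (hw : ContDiff ℝ 2 w)
    (hode : ∀ x ∈ Icc (0:ℝ) b,
      r * w x = (μ - α (max (1 - x) 0)) * deriv w x + σ ^ 2 / 2 * deriv (deriv w) x)
    (hw'b : deriv w b = 1) (hw''b : deriv (deriv w) b = 0) (hw0 : w 0 = 0)
    (hmono : StrictMonoOn w (Icc 0 b)) (hpos : ∀ x ∈ Ioo (0:ℝ) b, 0 < w x) :
    ∀ x ∈ Ico (1:ℝ) b, 1 < deriv w x ∧ deriv (deriv w) x < 0 :=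
  stmt_3_general μ σ r hσ hr α hα0 b hb w hw hode hw'b hw''b hmono
end

section
/- For y ∈ [0,1), let H₀ and H₁ be the solutions on [y,∞) of (σ²/2)H'' + (μ - α((1-x)^+))H' - rH = 0 with H₀(y)=1, H₀'(y)=0 and H₁(y)=0, H₁'(y)=1. Then H₀'(x) > 0 and H₁'(x) > 0 for all x > y. -/
open Set Filter Topology

private theorem key (σ r : ℝ) (hσ : 0 < σ) (hr : 0 < r) (b : ℝ → ℝ) (y : ℝ)
    (H : ℝ → ℝ) (hH : ContDiff ℝ 2 H)
    (hode : ∀ x ∈ Ici y, σ ^ 2 / 2 * deriv (deriv H) x + b x * deriv H x - r * H x = 0)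
    (hHy : 0 ≤ H y) (hH'y : 0 ≤ deriv H y) (hpos : 0 < H y ∨ 0 < deriv H y) :
    ∀ x > y, 0 < deriv H x := by
  have hσ2 : 0 < σ ^ 2 := by positivity
  have hd1 : ContDiff ℝ 1 (deriv H) := by
    have h2 : ContDiff ℝ ((1 : ℕ) + 1) H := by
      exact_mod_cast hH
    exact (contDiff_succ_iff_deriv.mp h2).2.2
  have hcont1 : Continuous (deriv H) := hd1.continuous
  have hcont2 : Continuous (deriv (deriv H)) := hd1.continuous_deriv le_rfl
  have hcontH : Continuous H := hH.continuous
  have hdiffH : Differentiable ℝ H := hH.differentiable (by norm_num)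
  have hpp : ∀ x, y ≤ x → deriv H x = 0 → 0 < H x → 0 < deriv (deriv H) x := by
    intro x hx h1 h2
    have h := hode x hx
    rw [h1] at h
    nlinarith
  -- Step A: find δ > 0 with deriv H > 0 on Ioc y (y+δ) and H (y+δ) > 0
  obtain ⟨δ, hδ, hIoc, hmid⟩ :
      ∃ δ > 0, (∀ t ∈ Ioc y (y + δ), 0 < deriv H t) ∧ 0 < H (y + δ) := by
    rcases lt_or_eq_of_le hH'y with h' | h'
    · -- deriv H y > 0
      have hopen : IsOpen {t : ℝ | 0 < deriv H t} := isOpen_lt continuous_const hcont1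
      obtain ⟨ε, hε, hball⟩ := Metric.isOpen_iff.mp hopen y h'
      refine ⟨ε / 2, by linarith, ?_, ?_⟩
      · intro t ht
        exact hball (by simp [Real.dist_eq, abs_lt]; constructor <;> [linarith [ht.1]; linarith [ht.2]])
      · have hsm : StrictMonoOn H (Icc y (y + ε / 2)) := by
          apply strictMonoOn_of_deriv_pos (convex_Icc _ _) hcontH.continuousOn
          intro t ht
          rw [interior_Icc] at ht
          exact hball (by simp [Real.dist_eq, abs_lt]; constructor <;> [linarith [ht.1]; linarith [ht.2]])
        have := hsm (left_mem_Icc.mpr (by linarith)) (right_mem_Icc.mpr (by linarith)) (by linarith)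
        linarith
    · -- deriv H y = 0, H y > 0
      have hHy0 : 0 < H y := by
        rcases hpos with h | h
        · exact h
        · rw [← h'] at h; linarith
      have h2 : 0 < deriv (deriv H) y := hpp y le_rfl h'.symm hHy0
      have hopen : IsOpen {t : ℝ | 0 < deriv (deriv H) t} := isOpen_lt continuous_const hcont2
      obtain ⟨ε, hε, hball⟩ := Metric.isOpen_iff.mp hopen y h2
      have hsm : StrictMonoOn (deriv H) (Icc y (y + ε / 2)) := by
        apply strictMonoOn_of_deriv_pos (convex_Icc _ _) hcont1.continuousOn
        intro t ht
        rw [interior_Icc] at ht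
        exact hball (by simp [Real.dist_eq, abs_lt]; constructor <;> [linarith [ht.1]; linarith [ht.2]])
      have hIocpos : ∀ t ∈ Ioc y (y + ε / 2), 0 < deriv H t := by
        intro t ht
        have := hsm (left_mem_Icc.mpr (by linarith)) ⟨le_of_lt ht.1, ht.2⟩ ht.1
        linarith
      refine ⟨ε / 2, by linarith, hIocpos, ?_⟩
      have hmono : MonotoneOn H (Icc y (y + ε / 2)) := by
        apply monotoneOn_of_deriv_nonneg (convex_Icc _ _) hcontH.continuousOn
          (hdiffH.differentiableOn)
        intro t ht
        rw [interior_Icc] at ht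
        exact le_of_lt (hIocpos t ⟨ht.1, le_of_lt ht.2⟩)
      have := hmono (left_mem_Icc.mpr (by linarith)) (right_mem_Icc.mpr (by linarith)) (by linarith)
      linarith
  -- Step B: contradiction argument
  by_contra hcon
  push_neg at hcon
  obtain ⟨z, hz, hz'⟩ := hcon
  set A : Set ℝ := {x | y < x ∧ deriv H x ≤ 0} with hA
  have hAne : A.Nonempty := ⟨z, hz, hz'⟩
  have hAbdd : BddBelow A := ⟨y, fun x hx => le_of_lt hx.1⟩
  set x₀ := sInf A with hx₀
  have hAlb : ∀ x ∈ A, y + δ < x := by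
    intro x hx
    by_contra hle
    push_neg at hle
    exact absurd hx.2 (not_le.mpr (hIoc x ⟨hx.1, hle⟩))
  have hmidle : y + δ ≤ x₀ := le_csInf hAne fun x hx => le_of_lt (hAlb x hx)
  have hx₀y : y < x₀ := by linarith
  have hposOn : ∀ t ∈ Ioo y x₀, 0 < deriv H t := by
    intro t ht
    by_contra hle
    push_neg at hle
    have : x₀ ≤ t := csInf_le hAbdd ⟨ht.1, hle⟩
    linarith [ht.2]
  have hcl : x₀ ∈ closure A := csInf_mem_closure hAne hAbdd
  have hx₀le : deriv H x₀ ≤ 0 := by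
    have hclosed : IsClosed {x : ℝ | deriv H x ≤ 0} := isClosed_le hcont1 continuous_const
    exact closure_minimal (fun x hx => hx.2) hclosed hcl
  have hx₀ge : 0 ≤ deriv H x₀ := by
    refine ge_of_tendsto (x := 𝓝[<] x₀) ((hcont1.tendsto x₀).mono_left nhdsWithin_le_nhds) ?_
    filter_upwards [Ioo_mem_nhdsLT_of_mem (by constructor <;> [exact hx₀y; exact le_rfl] :
      x₀ ∈ Ioc y x₀)] with t ht
    exact le_of_lt (hposOn t ht)
  have hx₀0 : deriv H x₀ = 0 := le_antisymm hx₀le hx₀ge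
  have hHx₀ : 0 < H x₀ := by
    have hmono : MonotoneOn H (Icc (y + δ) x₀) := by
      apply monotoneOn_of_deriv_nonneg (convex_Icc _ _) hcontH.continuousOn
        (hdiffH.differentiableOn)
      intro t ht
      rw [interior_Icc] at ht
      exact le_of_lt (hposOn t ⟨by linarith [ht.1], ht.2⟩)
    have := hmono (left_mem_Icc.mpr hmidle) (right_mem_Icc.mpr hmidle) hmidle
    linarith
  have h'' : 0 < deriv (deriv H) x₀ := hpp x₀ (le_of_lt hx₀y) hx₀0 hHx₀
  have hopen : IsOpen {t : ℝ | 0 < deriv (deriv H) t} := isOpen_lt continuous_const hcont2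
  obtain ⟨ε, hε, hball⟩ := Metric.isOpen_iff.mp hopen x₀ h''
  set ε' := min (ε / 2) ((x₀ - y) / 2) with hε'
  have hε'pos : 0 < ε' := lt_min (by linarith) (by linarith)
  have hε'le : ε' ≤ ε / 2 := min_le_left _ _
  have hε'le2 : ε' ≤ (x₀ - y) / 2 := min_le_right _ _
  have hsm : StrictMonoOn (deriv H) (Icc (x₀ - ε') x₀) := by
    apply strictMonoOn_of_deriv_pos (convex_Icc _ _) hcont1.continuousOn
    intro t ht
    rw [interior_Icc] at ht
    exact hball (by simp [Real.dist_eq, abs_lt]; constructor <;> linarith [ht.1, ht.2])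
  have hlt := hsm (left_mem_Icc.mpr (by linarith)) (right_mem_Icc.mpr (by linarith)) (by linarith)
  have hgt : 0 < deriv H (x₀ - ε') := hposOn _ ⟨by linarith, by linarith⟩
  rw [hx₀0] at hlt
  linarith

theorem stmt_5 (μ σ r : ℝ) (hσ : 0 < σ) (hr : 0 < r) (hμr : r < μ)
    (α : ℝ → ℝ) (hα : Continuous α) (hαmono : MonotoneOn α (Ici 0)) (hα0 : α 0 = 0)
    (hαnn : ∀ x ≥ (0:ℝ), 0 ≤ α x)
    (y : ℝ) (hy : y ∈ Ico (0:ℝ) 1)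
    (H₀ H₁ : ℝ → ℝ) (hH₀ : ContDiff ℝ 2 H₀) (hH₁ : ContDiff ℝ 2 H₁)
    (hode₀ : ∀ x ∈ Ici y,
      σ ^ 2 / 2 * deriv (deriv H₀) x + (μ - α (max (1 - x) 0)) * deriv H₀ x - r * H₀ x = 0)
    (hode₁ : ∀ x ∈ Ici y,
      σ ^ 2 / 2 * deriv (deriv H₁) x + (μ - α (max (1 - x) 0)) * deriv H₁ x - r * H₁ x = 0)
    (h00 : H₀ y = 1) (h01 : deriv H₀ y = 0) (h10 : H₁ y = 0) (h11 : deriv H₁ y = 1) :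
    ∀ x > y, 0 < deriv H₀ x ∧ 0 < deriv H₁ x := by
  intro x hx
  constructor
  · exact key σ r hσ hr (fun t => μ - α (max (1 - t) 0)) y H₀ hH₀ hode₀
      (by rw [h00]; norm_num) (by rw [h01]) (Or.inl (by rw [h00]; norm_num)) x hx
  · exact key σ r hσ hr (fun t => μ - α (max (1 - t) 0)) y H₁ hH₁ hode₁
      (by rw [h10]) (by rw [h11]; norm_num) (Or.inr (by rw [h11]; norm_num)) x hx
end

section
/- Fix y ∈ [0,1). For b ≥ y, let w_b be the solution of (σ²/2)w'' + (μ - α((1-x)^+))w' - rw = 0 with w_b(b) = (μ - α((1-b)^+))/r and w_b'(b) = 1. Then the map b ↦ w_b(y) is nondecreasing on [y,1] and strictly decreasing on (1,∞). -/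
/-!
Write `m x = μ - α ((1 - x)⁺)` and `E = exp ∫ m / a` with `a = σ² / 2`, so that the equation
`a w'' + m w' - r w = 0` becomes `(E w')' = (r / a) E w`. Let `(p, u) = (H₁, E H₁')` be the
solution of the first-order system with `p y = 0`, `u y = 1`. Its Wronskian `u w - p E w'` with
any solution `w` is constant, and evaluating it at `y` and at `b` gives
`w_b(y) = F b := u(b) m(b) / r - p(b) E(b)`, the paper's formula with `E = 1 / 𝒲`. Using the
system once more, `F' b = u(b) (m'(b) - r) / r`. Finally `u > 0`, while `m' = α'(1 - b) ≥ r` for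
`b < 1` and `m' = 0 < r` for `b > 1`.
-/

open Set Metric
open scoped NNReal

section LinearODE

variable {E : Type*} [NormedAddCommGroup E] [NormedSpace ℝ E]

theorem IsIntegralCurveOn.Icc_ite {v : ℝ → E → E} {f g : ℝ → E} {a c d : ℝ}
    (hf : IsIntegralCurveOn f v (Icc a c)) (hg : IsIntegralCurveOn g v (Icc c d))
    (hfg : f c = g c) (hac : a ≤ c) (hcd : c ≤ d) :
    IsIntegralCurveOn (fun t => if t ≤ c then f t else g t) v (Icc a d) := by
  set h := fun t => if t ≤ c then f t else g t
  have hhf : EqOn h f (Icc a c) := fun t ht => if_pos ht.2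
  have hhg : EqOn h g (Icc c d) := fun t ht => by
    rcases ht.1.eq_or_lt with rfl | hlt
    · simp [h, hfg]
    · exact if_neg (not_le.2 hlt)
  intro t _
  rw [← Icc_union_Icc_eq_Icc hac hcd]
  refine HasDerivWithinAt.union ?_ ?_
  · by_cases ht : t ∈ Icc a c
    · rw [hhf ht]; exact (hf t ht).congr hhf (hhf ht)
    · exact HasFDerivWithinAt.of_notMem_closure (by rwa [closure_Icc])
  · by_cases ht : t ∈ Icc c d
    · rw [hhg ht]; exact (hg t ht).congr hhg (hhg ht)
    · exact HasFDerivWithinAt.of_notMem_closure (by rwa [closure_Icc])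

variable [CompleteSpace E]

theorem exists_isIntegralCurveOn_Icc_clm_of_nnnorm_le {A : ℝ → E →L[ℝ] E} (hA : Continuous A)
    {K : ℝ≥0} {t₀ δ : ℝ} (hδ : 0 ≤ δ) (hKδ : 2 * K * δ ≤ 1)
    (hAK : ∀ t ∈ Icc t₀ (t₀ + δ), ‖A t‖₊ ≤ K) (x₀ : E) :
    ∃ f : ℝ → E, f t₀ = x₀ ∧ IsIntegralCurveOn f (fun t x => A t x) (Icc t₀ (t₀ + δ)) := by
  have hpl : IsPicardLindelof (fun t x => A t x) (tmin := t₀) (tmax := t₀ + δ)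
      ⟨t₀, le_rfl, by linarith⟩ x₀ ‖x₀‖₊ 0 (2 * K * ‖x₀‖₊) K :=
    { lipschitzOnWith := fun t ht => ((A t).lipschitz.weaken (hAK t ht)).lipschitzOnWith
      continuousOn := fun x _ => (hA.clm_apply continuous_const).continuousOn
      norm_le := fun t ht x hx => by
        have hx' : ‖x‖ ≤ 2 * ‖x₀‖ := by
          have := norm_le_norm_add_norm_sub' x x₀
          rw [mem_closedBall, dist_eq_norm] at hx
          push_cast at hx
          linarith
        have hK : ‖A t‖ ≤ K := hAK t ht
        calc ‖A t x‖ ≤ ‖A t‖ * ‖x‖ := (A t).le_opNorm x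
          _ ≤ K * (2 * ‖x₀‖) := by gcongr
          _ = _ := by push_cast; ring
      mul_max_le := by
        have : max (t₀ + δ - t₀) (t₀ - t₀) = δ := by simp [hδ]
        simp only [this, NNReal.coe_mul, NNReal.coe_ofNat, coe_nnnorm, NNReal.coe_zero, sub_zero]
        nlinarith [norm_nonneg x₀] }
  exact hpl.exists_eq_forall_mem_Icc_hasDerivWithinAt₀

/-- Linearity makes the Picard–Lindelöf step length independent of the initial value, so finitely
many glued steps cover `[a, b]`. -/
theorem exists_isIntegralCurveOn_Icc_clm {A : ℝ → E →L[ℝ] E} (hA : Continuous A) {a b : ℝ}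
    (hab : a ≤ b) (x₀ : E) :
    ∃ f : ℝ → E, f a = x₀ ∧ IsIntegralCurveOn f (fun t x => A t x) (Icc a b) := by
  obtain ⟨K, hK⟩ := (isCompact_Icc (a := a) (b := b + 1)).bddAbove_image hA.nnnorm.continuousOn
  set δ : ℝ := 1 / (2 * (K + 1))
  have hδ : 0 < δ := by positivity
  have hKδ : 2 * K * δ ≤ 1 := by
    rw [mul_one_div, div_le_one (by positivity)]; linarith
  have hδ1 : δ ≤ 1 := by
    rw [div_le_one (by positivity)]; linarith [K.2]
  have step : ∀ t₀ ∈ Icc a (b + 1 - δ), ∀ x : E,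
      ∃ g : ℝ → E, g t₀ = x ∧ IsIntegralCurveOn g (fun t x => A t x) (Icc t₀ (t₀ + δ)) :=
    fun t₀ ht₀ => exists_isIntegralCurveOn_Icc_clm_of_nnnorm_le hA hδ.le hKδ
      fun t ht => hK ⟨t, ⟨ht₀.1.trans ht.1, by linarith [ht.2, ht₀.2]⟩, rfl⟩
  have glued : ∀ n : ℕ, (n + 1) * δ ≤ b + 1 - a → ∃ f : ℝ → E, f a = x₀ ∧
      IsIntegralCurveOn f (fun t x => A t x) (Icc a (a + (n + 1) * δ)) := by
    intro n
    induction n with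
    | zero =>
      intro h
      simpa using step a ⟨le_rfl, by linarith⟩ x₀
    | succ n ih =>
      intro h
      push_cast at h ⊢
      obtain ⟨f, hfa, hf⟩ := ih (by linarith)
      obtain ⟨g, hg, hg'⟩ :=
        step (a + (n + 1) * δ) ⟨by nlinarith, by linarith⟩ (f (a + (n + 1) * δ))
      rw [show a + (n + 1 + 1) * δ = a + (n + 1) * δ + δ by ring]
      refine ⟨_, ?_, hf.Icc_ite hg' hg.symm (by nlinarith) (by linarith)⟩
      simp [hfa, show a ≤ a + (n + 1) * δ by nlinarith]
  obtain ⟨f, hfa, hf⟩ := glued ⌊(b - a) / δ⌋₊ <| by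
    have := (Nat.floor_le (div_nonneg (sub_nonneg.2 hab) hδ.le))
    rw [le_div_iff₀ hδ] at this
    linarith
  refine ⟨f, hfa, hf.mono (Icc_subset_Icc_right ?_)⟩
  have := Nat.lt_floor_add_one ((b - a) / δ)
  rw [div_lt_iff₀ hδ] at this
  linarith

end LinearODE

theorem monotoneOn_Icc_of_hasDerivWithinAt_nonneg {a b : ℝ} {φ φ' : ℝ → ℝ}
    (hφ : ∀ t ∈ Icc a b, HasDerivWithinAt φ (φ' t) (Icc a b) t) (hφ' : ∀ t ∈ Ioo a b, 0 ≤ φ' t) :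
    MonotoneOn φ (Icc a b) := by
  refine monotoneOn_of_hasDerivWithinAt_nonneg (convex_Icc a b)
    (fun t ht => (hφ t ht).continuousWithinAt) (fun t ht => ?_) (by simpa using hφ')
  exact (hφ t (interior_subset ht)).mono interior_subset

/-- First-order form `(w, P w')` of the self-adjoint equation `(P w')' = Q w`. -/
noncomputable def sturmLiouvilleSystem (P Q : ℝ → ℝ) (t : ℝ) : ℝ × ℝ →L[ℝ] ℝ × ℝ :=
  (P t)⁻¹ • (ContinuousLinearMap.inl ℝ ℝ ℝ ∘L ContinuousLinearMap.snd ℝ ℝ ℝ) +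
    Q t • (ContinuousLinearMap.inr ℝ ℝ ℝ ∘L ContinuousLinearMap.fst ℝ ℝ ℝ)

section SturmLiouville

variable {P Q : ℝ → ℝ} {f g : ℝ → ℝ × ℝ} {s : Set ℝ} {t a b : ℝ}

@[simp]
theorem sturmLiouvilleSystem_apply (x : ℝ × ℝ) :
    sturmLiouvilleSystem P Q t x = ((P t)⁻¹ * x.2, Q t * x.1) := by
  simp [sturmLiouvilleSystem]

theorem continuous_sturmLiouvilleSystem (hP : Continuous P) (hP₀ : ∀ t, P t ≠ 0)
    (hQ : Continuous Q) : Continuous (sturmLiouvilleSystem P Q) :=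
  ((hP.inv₀ hP₀).smul continuous_const).add (hQ.smul continuous_const)

theorem IsIntegralCurveOn.sturmLiouville_fst
    (hf : IsIntegralCurveOn f (fun t x => sturmLiouvilleSystem P Q t x) s) (ht : t ∈ s) :
    HasDerivWithinAt (fun t => (f t).1) ((P t)⁻¹ * (f t).2) s t := by
  have := (ContinuousLinearMap.fst ℝ ℝ ℝ).hasFDerivAt.comp_hasDerivWithinAt t (hf t ht)
  simp only [sturmLiouvilleSystem_apply, ContinuousLinearMap.coe_fst'] at this
  exact this

theorem IsIntegralCurveOn.sturmLiouville_snd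
    (hf : IsIntegralCurveOn f (fun t x => sturmLiouvilleSystem P Q t x) s) (ht : t ∈ s) :
    HasDerivWithinAt (fun t => (f t).2) (Q t * (f t).1) s t := by
  have := (ContinuousLinearMap.snd ℝ ℝ ℝ).hasFDerivAt.comp_hasDerivWithinAt t (hf t ht)
  simp only [sturmLiouvilleSystem_apply, ContinuousLinearMap.coe_snd'] at this
  exact this

theorem IsIntegralCurveOn.sturmLiouville_wronskian_eq (hab : a ≤ b)
    (hf : IsIntegralCurveOn f (fun t x => sturmLiouvilleSystem P Q t x) (Icc a b))
    (hg : IsIntegralCurveOn g (fun t x => sturmLiouvilleSystem P Q t x) (Icc a b)) :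
    (f b).1 * (g b).2 - (f b).2 * (g b).1 = (f a).1 * (g a).2 - (f a).2 * (g a).1 := by
  have hderiv : ∀ t ∈ Icc a b, HasDerivWithinAt
      (fun t => (f t).1 * (g t).2 - (f t).2 * (g t).1) 0 (Icc a b) t := fun t ht =>
    ((hf.sturmLiouville_fst ht).mul (hg.sturmLiouville_snd ht)).sub
      ((hf.sturmLiouville_snd ht).mul (hg.sturmLiouville_fst ht)) |>.congr_deriv (by ring)
  simpa [sub_eq_zero] using
    norm_image_sub_le_of_norm_deriv_le_segment' hderiv (fun _ _ => norm_zero.le) b ⟨hab, le_rfl⟩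

/-- Both `p u` and `u ^ 2` are nondecreasing along a solution `(p, u)`, so `u ^ 2` stays
positive and `u` cannot change sign. -/
theorem IsIntegralCurveOn.sturmLiouville_snd_pos (hP : ∀ t ∈ Icc a b, 0 < P t)
    (hQ : ∀ t ∈ Icc a b, 0 ≤ Q t)
    (hf : IsIntegralCurveOn f (fun t x => sturmLiouvilleSystem P Q t x) (Icc a b))
    (hfa : 0 ≤ (f a).1 * (f a).2) (hfa' : 0 < (f a).2) :
    ∀ t ∈ Icc a b, 0 < (f t).2 := by
  have hprod : ∀ t ∈ Icc a b, 0 ≤ (f t).1 * (f t).2 := by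
    have hmono := monotoneOn_Icc_of_hasDerivWithinAt_nonneg
      (fun t ht => ((hf.sturmLiouville_fst ht).mul (hf.sturmLiouville_snd ht)).congr_deriv
        (show _ = (P t)⁻¹ * (f t).2 ^ 2 + Q t * (f t).1 ^ 2 by ring)) fun t ht => by
        have := hP t (Ioo_subset_Icc_self ht)
        have := hQ t (Ioo_subset_Icc_self ht)
        positivity
    exact fun t ht => hfa.trans (hmono ⟨le_rfl, ht.1.trans ht.2⟩ ht ht.1)
  have hsq : ∀ t ∈ Icc a b, (f a).2 ^ 2 ≤ (f t).2 ^ 2 := by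
    have hmono := monotoneOn_Icc_of_hasDerivWithinAt_nonneg
      (fun t ht => ((hf.sturmLiouville_snd ht).pow 2).congr_deriv
        (show _ = 2 * Q t * ((f t).1 * (f t).2) by ring)) fun t ht => by
        have := hQ t (Ioo_subset_Icc_self ht)
        have := hprod t (Ioo_subset_Icc_self ht)
        positivity
    exact fun t ht => hmono ⟨le_rfl, ht.1.trans ht.2⟩ ht ht.1
  intro t ht
  by_contra! hneg
  obtain ⟨s, hs, hs0⟩ := intermediate_value_Icc' ht.1
    (hf.continuousOn.snd.mono (Icc_subset_Icc_right ht.2)) ⟨hneg, hfa'.le⟩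
  have := hsq s ⟨hs.1, hs.2.trans ht.2⟩
  simp only [hs0] at this
  nlinarith

end SturmLiouville

section SecondOrder

variable {a r : ℝ} {m : ℝ → ℝ}

theorem isIntegralCurveOn_sturmLiouville_of_ode {E w : ℝ → ℝ} {s : Set ℝ} (ha : a ≠ 0)
    (hE : ∀ t, HasDerivAt E (m t / a * E t) t) (hE₀ : ∀ t, E t ≠ 0) (hw : ContDiff ℝ 2 w)
    (hode : ∀ x ∈ s, a * deriv (deriv w) x + m x * deriv w x - r * w x = 0) :
    IsIntegralCurveOn (fun t => (w t, E t * deriv w t))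
      (fun t x => sturmLiouvilleSystem E (fun t => r / a * E t) t x) s := by
  have hw' : ContDiff ℝ 1 (deriv w) := hw.iterate_deriv' 1 1
  intro t ht
  have h₁ : HasDerivAt w (deriv w t) t := (hw.differentiable (by norm_num) t).hasDerivAt
  have h₂ : HasDerivAt (deriv w) (deriv (deriv w) t) t :=
    (hw'.differentiable (by norm_num) t).hasDerivAt
  refine (h₁.prodMk ((hE t).mul h₂)).hasDerivWithinAt.congr_deriv ?_
  simp only [sturmLiouvilleSystem_apply, Prod.mk.injEq]
  constructor
  · field_simp [hE₀ t]
  · field_simp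
    linear_combination E t * hode t ht

theorem exists_forall_ode_apply_left_eq (ha : 0 < a) (hr : 0 < r) (hm : Continuous m) {y B : ℝ}
    (hyB : y ≤ B) :
    ∃ F c : ℝ → ℝ, ContinuousOn F (Icc y B) ∧
      (∀ b ∈ Ioo y B, 0 < c b ∧ ∀ m', HasDerivAt m m' b → HasDerivAt F (c b * (m' - r)) b) ∧
      ∀ b ∈ Icc y B, ∀ w : ℝ → ℝ, ContDiff ℝ 2 w →
        (∀ x ∈ Icc y b, a * deriv (deriv w) x + m x * deriv w x - r * w x = 0) →
        w b = m b / r → deriv w b = 1 → w y = F b := by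
  set E : ℝ → ℝ := fun t => Real.exp (∫ s in y..t, m s / a)
  have hE : ∀ t, HasDerivAt E (m t / a * E t) t := fun t => by
    have hma : Continuous fun s => m s / a := hm.div_const a
    simpa [E, mul_comm] using (intervalIntegral.integral_hasDerivAt_right
      (hma.intervalIntegrable y t) (hma.stronglyMeasurableAtFilter _ _) hma.continuousAt).exp
  have hE₀ : ∀ t, 0 < E t := fun t => Real.exp_pos _
  have hEc : Continuous E := continuous_iff_continuousAt.2 fun t => (hE t).continuousAt
  obtain ⟨f, hf₀, hf⟩ := exists_isIntegralCurveOn_Icc_clm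
    (continuous_sturmLiouvilleSystem hEc (fun t => (hE₀ t).ne') (hEc.const_mul (r / a)))
    hyB ((0 : ℝ), (1 : ℝ))
  have hpos := hf.sturmLiouville_snd_pos (fun t _ => hE₀ t)
    (fun t _ => (mul_pos (div_pos hr ha) (hE₀ t)).le) (by simp [hf₀]) (by simp [hf₀])
  refine ⟨fun b => (f b).2 * m b / r - (f b).1 * E b, fun b => (f b).2 / r, ?_,
    fun b hb => ⟨div_pos (hpos b (Ioo_subset_Icc_self hb)) hr, fun m' hm' => ?_⟩,
    fun b hb w hw hode hwb hw'b => ?_⟩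
  · exact ((hf.continuousOn.snd.mul hm.continuousOn).div_const r).sub
      (hf.continuousOn.fst.mul hEc.continuousOn)
  · have hb' := Icc_mem_nhds hb.1 hb.2
    have h₁ := (hf.sturmLiouville_fst (Ioo_subset_Icc_self hb)).hasDerivAt hb'
    have h₂ := (hf.sturmLiouville_snd (Ioo_subset_Icc_self hb)).hasDerivAt hb'
    refine (((h₂.mul hm').div_const r).sub (h₁.mul (hE b))).congr_deriv ?_
    field_simp [(hE₀ b).ne']
    ring
  · have hw := isIntegralCurveOn_sturmLiouville_of_ode ha.ne' hE (fun t => (hE₀ t).ne') hw hode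
    have := (hf.mono (Icc_subset_Icc_right hb.2)).sturmLiouville_wronskian_eq hb.1 hw
    have hEy : E y = 1 := by simp [E]
    simp only [hf₀, hwb, hw'b, hEy] at this
    linear_combination this

variable {W : ℝ → ℝ → ℝ} {y b₀ b₁ : ℝ}

theorem exists_eqOn_apply_left (ha : 0 < a) (hr : 0 < r) (hm : Continuous m)
    (hW : ∀ b ≥ y, ContDiff ℝ 2 (W b))
    (hode : ∀ b ≥ y, ∀ x ∈ Icc y b,
      a * deriv (deriv (W b)) x + m x * deriv (W b) x - r * W b x = 0)
    (hWb : ∀ b ≥ y, W b b = m b / r) (hW'b : ∀ b ≥ y, deriv (W b) b = 1) (hy : y ≤ b₀) :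
    ∃ F c : ℝ → ℝ, EqOn (fun b => W b y) F (Icc b₀ b₁) ∧ ContinuousOn F (Icc b₀ b₁) ∧
      ∀ b ∈ Ioo b₀ b₁, 0 < c b ∧ ∀ m', HasDerivAt m m' b → HasDerivAt F (c b * (m' - r)) b := by
  obtain ⟨F, c, hFc, hF', hFW⟩ :=
    exists_forall_ode_apply_left_eq ha hr hm (hy.trans (le_max_left b₀ b₁))
  have hsub : Icc b₀ b₁ ⊆ Icc y (max b₀ b₁) := Icc_subset_Icc hy (le_max_right _ _)
  refine ⟨F, c, fun b hb => ?_, hFc.mono hsub, fun b hb => hF' b ?_⟩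
  · have hyb : b ≥ y := hy.trans hb.1
    exact hFW b (hsub hb) (W b) (hW b hyb) (hode b hyb) (hWb b hyb) (hW'b b hyb)
  · exact Ioo_subset_Ioo hy (le_max_right _ _) hb

theorem monotoneOn_apply_left_of_le_deriv (ha : 0 < a) (hr : 0 < r) (hm : Continuous m)
    (hW : ∀ b ≥ y, ContDiff ℝ 2 (W b))
    (hode : ∀ b ≥ y, ∀ x ∈ Icc y b,
      a * deriv (deriv (W b)) x + m x * deriv (W b) x - r * W b x = 0)
    (hWb : ∀ b ≥ y, W b b = m b / r) (hW'b : ∀ b ≥ y, deriv (W b) b = 1) (hy : y ≤ b₀)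
    {m' : ℝ → ℝ} (hm' : ∀ b ∈ Ioo b₀ b₁, HasDerivAt m (m' b) b)
    (hrm' : ∀ b ∈ Ioo b₀ b₁, r ≤ m' b) :
    MonotoneOn (fun b => W b y) (Icc b₀ b₁) := by
  obtain ⟨F, c, hWF, hFc, hF'⟩ := exists_eqOn_apply_left ha hr hm hW hode hWb hW'b hy
  refine (monotoneOn_of_hasDerivWithinAt_nonneg (f' := fun b => c b * (m' b - r))
    (convex_Icc _ _) hFc (fun b hb => ?_) (fun b hb => ?_)).congr hWF.symm <;>
    rw [interior_Icc] at hb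
  · exact ((hF' b hb).2 _ (hm' b hb)).hasDerivWithinAt
  · exact mul_nonneg (hF' b hb).1.le (sub_nonneg.2 (hrm' b hb))

theorem strictAntiOn_apply_left_of_deriv_lt (ha : 0 < a) (hr : 0 < r) (hm : Continuous m)
    (hW : ∀ b ≥ y, ContDiff ℝ 2 (W b))
    (hode : ∀ b ≥ y, ∀ x ∈ Icc y b,
      a * deriv (deriv (W b)) x + m x * deriv (W b) x - r * W b x = 0)
    (hWb : ∀ b ≥ y, W b b = m b / r) (hW'b : ∀ b ≥ y, deriv (W b) b = 1) (hy : y ≤ b₀)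
    {m' : ℝ → ℝ} (hm' : ∀ b ∈ Ioo b₀ b₁, HasDerivAt m (m' b) b)
    (hrm' : ∀ b ∈ Ioo b₀ b₁, m' b < r) :
    StrictAntiOn (fun b => W b y) (Icc b₀ b₁) := by
  obtain ⟨F, c, hWF, hFc, hF'⟩ := exists_eqOn_apply_left ha hr hm hW hode hWb hW'b hy
  refine (strictAntiOn_of_hasDerivWithinAt_neg (f' := fun b => c b * (m' b - r))
    (convex_Icc _ _) hFc (fun b hb => ?_) (fun b hb => ?_)).congr hWF.symm <;>
    rw [interior_Icc] at hb
  · exact ((hF' b hb).2 _ (hm' b hb)).hasDerivWithinAt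
  · exact mul_neg_of_pos_of_neg (hF' b hb).1 (sub_neg.2 (hrm' b hb))

end SecondOrder

theorem stmt_7_general (μ σ r : ℝ) (hσ : 0 < σ) (hr : 0 < r)
    (α : ℝ → ℝ) (hα : ContDiff ℝ 1 α)
    (hα' : ∀ x ≥ (0:ℝ), r ≤ deriv α x)
    (y : ℝ) (hy : y ∈ Ico (0:ℝ) 1)
    (W : ℝ → ℝ → ℝ) (hW : ∀ b ≥ y, ContDiff ℝ 2 (W b))
    (hode : ∀ b ≥ y, ∀ x ∈ Icc y b,
      σ ^ 2 / 2 * deriv (deriv (W b)) x + (μ - α (max (1 - x) 0)) * deriv (W b) x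
        - r * W b x = 0)
    (hWb : ∀ b ≥ y, W b b = (μ - α (max (1 - b) 0)) / r)
    (hW'b : ∀ b ≥ y, deriv (W b) b = 1) :
    MonotoneOn (fun b => W b y) (Icc y 1) ∧ StrictAntiOn (fun b => W b y) (Ioi 1) := by
  set m : ℝ → ℝ := fun x => μ - α (max (1 - x) 0)
  have hm : Continuous m := by fun_prop
  have ha : 0 < σ ^ 2 / 2 := by positivity
  have hm_lt : ∀ b < 1, HasDerivAt m (deriv α (1 - b)) b := fun b hb => by
    have h := (((hα.differentiable one_ne_zero) (1 - b)).hasDerivAt.comp b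
      ((hasDerivAt_id b).const_sub 1)).const_sub μ
    refine (h.congr_deriv (by simp)).congr_of_eventuallyEq ?_
    filter_upwards [Iio_mem_nhds hb] with x hx
    simp [m, max_eq_left (show 0 ≤ 1 - x by linarith [mem_Iio.1 hx])]
  have hm_gt : ∀ b > 1, HasDerivAt m 0 b := fun b hb => by
    refine (hasDerivAt_const b (μ - α 0)).congr_of_eventuallyEq ?_
    filter_upwards [Ioi_mem_nhds hb] with x hx
    simp [m, max_eq_right (show 1 - x ≤ 0 by linarith [mem_Ioi.1 hx])]
  constructor
  · exact monotoneOn_apply_left_of_le_deriv ha hr hm hW hode hWb hW'b le_rfl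
      (fun b hb => hm_lt b hb.2) fun b hb => hα' _ (by linarith [hb.2])
  · intro b hb b' hb' hlt
    exact strictAntiOn_apply_left_of_deriv_lt (b₁ := b') ha hr hm hW hode hWb hW'b hy.2.le
      (fun c hc => hm_gt c hc.1) (fun _ _ => hr) ⟨le_of_lt hb, hlt.le⟩ ⟨le_of_lt hb', le_rfl⟩ hlt

theorem stmt_7 (μ σ r : ℝ) (hσ : 0 < σ) (hr : 0 < r) (hμr : r < μ)
    (α : ℝ → ℝ) (hα : ContDiff ℝ 1 α) (hαconv : ConvexOn ℝ (Ici 0) α)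
    (hαmono : StrictMonoOn α (Ici 0)) (hα0 : α 0 = 0)
    (hα' : ∀ x ≥ (0:ℝ), r ≤ deriv α x)
    (y : ℝ) (hy : y ∈ Ico (0:ℝ) 1)
    (W : ℝ → ℝ → ℝ) (hW : ∀ b ≥ y, ContDiff ℝ 2 (W b))
    (hode : ∀ b ≥ y, ∀ x ∈ Icc y b,
      σ ^ 2 / 2 * deriv (deriv (W b)) x + (μ - α (max (1 - x) 0)) * deriv (W b) x
        - r * W b x = 0)
    (hWb : ∀ b ≥ y, W b b = (μ - α (max (1 - b) 0)) / r)
    (hW'b : ∀ b ≥ y, deriv (W b) b = 1) :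
    MonotoneOn (fun b => W b y) (Icc y 1) ∧ StrictAntiOn (fun b => W b y) (Ioi 1) :=
  stmt_7_general μ σ r hσ hr α hα hα' y hy W hW hode hWb hW'b
end

section
/- Assume μ ≥ α(1) and μ > r. Then there exists b* ∈ (1, μ/r) such that the solution w_{b*} of the Cauchy problem r w = (μ - α((1-x)^+))w' + (σ²/2)w'' with w'(b*) = 1 and w''(b*) = 0 satisfies w_{b*}(0) = 0. -/
/-!
Solve `(σ²/2) w'' = r w - (μ - α((1-x)⁺)) w'` once, from `w 0 = 0`, `w' 0 = 1`, on
`[0, μ/r]`; an integrating factor shows `w' > 0` there. On `(0, 1)` the coefficient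
`μ - α(1-x)` has slope `α'(1-x) ≥ r`, and the integrating factor then shows `w'' ≤ 0` on `[0, 1]`,
with `w'' 1 < 0` (either `α 1 < μ`, or the mean value theorem gives `α' > r` somewhere).
If `w''` had no zero in `(1, μ/r)`, then `x w' - w` would decrease strictly on `[0, μ/r]`, so that
`(σ²/2) w''(μ/r) = r (w - (μ/r) w')(μ/r) > 0`; hence `w'' b = 0` for some `b ∈ (1, μ/r)`, and
`w / w' b` is the required solution, extended to a `C²` function on `ℝ`.

The solution on a compact interval comes from Picard–Lindelöf applied to the vector field
composed with a radial retraction onto a ball which, by Grönwall, the solution never leaves.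
-/

open Set Filter Topology Metric Real
open scoped NNReal

noncomputable section

section BallRetraction

variable {E : Type*} [NormedAddCommGroup E] [NormedSpace ℝ E]

def ballRetraction (ρ : ℝ) (x : E) : E := (ρ / max ρ ‖x‖) • x

variable {ρ : ℝ}

theorem norm_ballRetraction (hρ : 0 < ρ) (x : E) :
    ‖ballRetraction ρ x‖ = ρ / max ρ ‖x‖ * ‖x‖ := by
  have : 0 < max ρ ‖x‖ := lt_max_of_lt_left hρ
  rw [ballRetraction, norm_smul, Real.norm_of_nonneg (by positivity)]

theorem norm_ballRetraction_le (hρ : 0 < ρ) (x : E) : ‖ballRetraction ρ x‖ ≤ ‖x‖ := by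
  rw [norm_ballRetraction hρ]
  exact mul_le_of_le_one_left (norm_nonneg x) (div_le_one_of_le₀ (le_max_left _ _) (by positivity))

theorem norm_ballRetraction_le_radius (hρ : 0 < ρ) (x : E) : ‖ballRetraction ρ x‖ ≤ ρ := by
  have : 0 < max ρ ‖x‖ := lt_max_of_lt_left hρ
  rw [norm_ballRetraction hρ, div_mul_eq_mul_div, div_le_iff₀ this]
  exact mul_le_mul_of_nonneg_left (le_max_right _ _) hρ.le

theorem ballRetraction_of_norm_le {x : E} (hx : ‖x‖ ≤ ρ) : ballRetraction ρ x = x := by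
  rcases eq_or_ne x 0 with rfl | hx0
  · simp [ballRetraction]
  · rw [ballRetraction, max_eq_left hx, div_self ((norm_pos_iff.2 hx0).trans_le hx).ne', one_smul]

theorem lipschitzWith_ballRetraction (hρ : 0 < ρ) :
    LipschitzWith 2 (ballRetraction ρ : E → E) := by
  refine LipschitzWith.of_dist_le_mul fun x y => ?_
  wlog hyx : ‖y‖ ≤ ‖x‖ generalizing x y
  · rw [dist_comm, dist_comm x]
    exact this y x (le_of_not_ge hyx)
  set Mx := max ρ ‖x‖
  set My := max ρ ‖y‖
  have hMx : 0 < Mx := lt_max_of_lt_left hρ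
  have hMy : 0 < My := lt_max_of_lt_left hρ
  have hMyx : My ≤ Mx := max_le_max le_rfl hyx
  have hM : Mx - My ≤ ‖x‖ - ‖y‖ := by
    simp only [Mx, My, max_def]; split_ifs <;> linarith
  have hsx : ρ / Mx ≤ 1 := div_le_one_of_le₀ (le_max_left _ _) hMx.le
  have hsy : ‖y‖ / My ≤ 1 := div_le_one_of_le₀ (le_max_right _ _) hMy.le
  -- the difference of the images is `(ρ / Mx) • (x - y) + (ρ / Mx - ρ / My) • y`, and the norm
  -- of its second term is at most `‖x‖ - ‖y‖`
  have hscale : |ρ / Mx - ρ / My| * ‖y‖ ≤ Mx - My := by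
    have hdiff : ρ / My - ρ / Mx = (Mx - My) * (ρ / Mx) * (1 / My) := by field_simp
    rw [abs_sub_comm, abs_of_nonneg (sub_nonneg.2 (div_le_div_of_nonneg_left hρ.le hMy hMyx)),
      hdiff]
    calc (Mx - My) * (ρ / Mx) * (1 / My) * ‖y‖ = (Mx - My) * (ρ / Mx) * (‖y‖ / My) := by ring
      _ ≤ (Mx - My) * 1 * 1 := by gcongr
      _ = Mx - My := by ring
  rw [dist_eq_norm, dist_eq_norm, ballRetraction, ballRetraction,
    show (ρ / Mx) • x - (ρ / My) • y = (ρ / Mx) • (x - y) + (ρ / Mx - ρ / My) • y by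
      simp only [smul_sub, sub_smul]; abel]
  calc ‖(ρ / Mx) • (x - y) + (ρ / Mx - ρ / My) • y‖
      ≤ ρ / Mx * ‖x - y‖ + |ρ / Mx - ρ / My| * ‖y‖ := by
        refine (norm_add_le _ _).trans_eq ?_
        rw [norm_smul, norm_smul, Real.norm_of_nonneg (by positivity), Real.norm_eq_abs]
    _ ≤ 1 * ‖x - y‖ + (‖x‖ - ‖y‖) := by gcongr; linarith
    _ ≤ (2 : ℝ≥0) * ‖x - y‖ := by
        push_cast; linarith [norm_sub_norm_le x y]

end BallRetraction

theorem exists_forall_hasDerivWithinAt_Icc_of_lipschitzWith {E : Type*} [NormedAddCommGroup E]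
    [NormedSpace ℝ E] [CompleteSpace E] {f : ℝ → E → E} {a b : ℝ} {K : ℝ≥0} (hab : a ≤ b)
    (hlip : ∀ t ∈ Icc a b, LipschitzWith K (f t)) (hcont : ∀ x, ContinuousOn (f · x) (Icc a b))
    (x₀ : E) :
    ∃ γ : ℝ → E, γ a = x₀ ∧ ∀ t ∈ Icc a b, HasDerivWithinAt γ (f t (γ t)) (Icc a b) t := by
  obtain ⟨B, hB⟩ := isCompact_Icc.exists_bound_of_continuousOn (hcont 0)
  have hB0 : 0 ≤ B := (norm_nonneg _).trans (hB a (left_mem_Icc.2 hab))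
  have hgrowth : ∀ t ∈ Icc a b, ∀ x, ‖f t x‖ ≤ K * ‖x‖ + B := fun t ht x => by
    have := (hlip t ht).norm_sub_le x 0
    rw [sub_zero] at this
    linarith [norm_le_insert' (f t x) (f t 0), hB t ht]
  -- by Grönwall, the truncated solution stays in the ball of radius `ρ`, where it solves `f`
  set ρ := max 1 (gronwallBound ‖x₀‖ K B (b - a))
  have hρ : 0 < ρ := lt_max_of_lt_left one_pos
  set g : ℝ → E → E := fun t x => f t (ballRetraction ρ x)
  set L : ℝ≥0 := ⟨K * ρ + B, by positivity⟩
  have hpl : IsPicardLindelof g (tmin := a) (tmax := b) ⟨a, left_mem_Icc.2 hab⟩ x₀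
      ⟨L * (b - a), mul_nonneg L.2 (sub_nonneg.2 hab)⟩ 0 L (K * 2) :=
    { lipschitzOnWith := fun t ht =>
        ((hlip t ht).comp (lipschitzWith_ballRetraction hρ)).lipschitzOnWith
      continuousOn := fun x _ => hcont _
      norm_le := fun t ht x _ => by
        refine (hgrowth t ht _).trans ?_
        change _ ≤ K * ρ + B
        gcongr
        exact norm_ballRetraction_le_radius hρ x
      mul_max_le := by
        simp only [sub_self, NNReal.coe_zero, sub_zero]
        rw [max_eq_left (sub_nonneg.2 hab)]; rfl }
  obtain ⟨γ, hγa, hγ⟩ := hpl.exists_eq_forall_mem_Icc_hasDerivWithinAt₀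
  have hbound : ∀ t ∈ Icc a b, ‖γ t‖ ≤ ρ := by
    intro t ht
    have hgr := norm_le_gronwallBound_of_norm_deriv_right_le (f := γ) (f' := fun t => g t (γ t))
      (δ := ‖x₀‖) (K := K) (ε := B) (fun t ht => (hγ t ht).continuousWithinAt)
      (fun t ht => (hγ t (Ico_subset_Icc_self ht)).mono_of_mem_nhdsWithin
        (Icc_mem_nhdsGE_of_mem ht))
      (by rw [show γ a = x₀ from hγa])
      (fun t ht => (hgrowth t (Ico_subset_Icc_self ht) _).trans
        (by gcongr; exact norm_ballRetraction_le hρ _)) t ht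
    exact hgr.trans ((gronwallBound_mono (norm_nonneg _) hB0 K.2 (by linarith [ht.2])).trans
      (le_max_right _ _))
  refine ⟨γ, hγa, fun t ht => ?_⟩
  have := hγ t ht
  rwa [show g t (γ t) = f t (γ t) by simp only [g, ballRetraction_of_norm_le (hbound t ht)]] at this

theorem exists_forall_hasDerivWithinAt_Icc_of_continuousOn_clm {E : Type*} [NormedAddCommGroup E]
    [NormedSpace ℝ E] [CompleteSpace E] {A : ℝ → E →L[ℝ] E} {a b : ℝ} (hab : a ≤ b)
    (hA : ContinuousOn A (Icc a b)) (x₀ : E) :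
    ∃ γ : ℝ → E, γ a = x₀ ∧ ∀ t ∈ Icc a b, HasDerivWithinAt γ (A t (γ t)) (Icc a b) t := by
  obtain ⟨C, hC⟩ := isCompact_Icc.exists_bound_of_continuousOn hA
  refine exists_forall_hasDerivWithinAt_Icc_of_lipschitzWith (K := C.toNNReal) hab
    (fun t ht => (A t).lipschitz.weaken ?_) (fun x => hA.clm_apply continuousOn_const) x₀
  rw [← NNReal.coe_le_coe, coe_nnnorm]
  exact (hC t ht).trans (Real.le_coe_toNNReal C)

/-- `(y, u) = (w, w')` for a solution `w` of `w'' = p w - q w'` on `s`. -/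
def SolvesOn (p : ℝ) (q y u : ℝ → ℝ) (s : Set ℝ) : Prop :=
  ∀ x ∈ s, HasDerivWithinAt y (u x) s x ∧ HasDerivWithinAt u (p * y x - q x * u x) s x

theorem SolvesOn.exists {a b : ℝ} (hab : a ≤ b) (p : ℝ) {q : ℝ → ℝ} (hq : Continuous q)
    (y₀ u₀ : ℝ) : ∃ y u : ℝ → ℝ, y a = y₀ ∧ u a = u₀ ∧ SolvesOn p q y u (Icc a b) := by
  let A₀ : ℝ × ℝ →L[ℝ] ℝ × ℝ :=
    (ContinuousLinearMap.snd ℝ ℝ ℝ).prod (p • ContinuousLinearMap.fst ℝ ℝ ℝ)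
  let A₁ : ℝ × ℝ →L[ℝ] ℝ × ℝ := (0 : ℝ × ℝ →L[ℝ] ℝ).prod (-ContinuousLinearMap.snd ℝ ℝ ℝ)
  obtain ⟨γ, hγa, hγ⟩ := exists_forall_hasDerivWithinAt_Icc_of_continuousOn_clm
    (A := fun t => A₀ + q t • A₁) hab
    (continuous_const.add (hq.smul continuous_const)).continuousOn (y₀, u₀)
  refine ⟨fun t => (γ t).1, fun t => (γ t).2, by simp [hγa], by simp [hγa], fun x hx => ?_⟩
  have h := hγ x hx
  have h₁ := (ContinuousLinearMap.fst ℝ ℝ ℝ).hasFDerivAt.comp_hasDerivWithinAt x h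
  have h₂ := (ContinuousLinearMap.snd ℝ ℝ ℝ).hasFDerivAt.comp_hasDerivWithinAt x h
  exact ⟨h₁.congr_deriv (by simp [A₀, A₁]), h₂.congr_deriv (by simp [A₀, A₁]; ring)⟩

theorem HasDerivWithinAt.hasDerivWithinAt_Ici_of_mem_Ico {f : ℝ → ℝ} {f' a b x : ℝ}
    (h : HasDerivWithinAt f f' (Icc a b) x) (hx : x ∈ Ico a b) : HasDerivWithinAt f f' (Ici x) x :=
  h.mono_of_mem_nhdsWithin (Icc_mem_nhdsGE_of_mem hx)

theorem exists_contDiff_two_eqOn_Icc {a b : ℝ} (hab : a ≤ b) {y u v : ℝ → ℝ}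
    (hy : ∀ x ∈ Icc a b, HasDerivWithinAt y (u x) (Icc a b) x)
    (hu : ∀ x ∈ Icc a b, HasDerivWithinAt u (v x) (Icc a b) x) (hv : ContinuousOn v (Icc a b)) :
    ∃ w : ℝ → ℝ, ContDiff ℝ 2 w ∧
      ∀ x ∈ Icc a b, w x = y x ∧ deriv w x = u x ∧ deriv (deriv w) x = v x := by
  -- integrate twice the extension of `v` by constants
  set g : ℝ → ℝ := fun x => v (projIcc a b hab x)
  have hg : Continuous g := hv.comp_continuous (continuous_subtype_val.comp continuous_projIcc)
    fun x => (projIcc a b hab x).2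
  have hgv : ∀ x ∈ Icc a b, g x = v x := fun x hx => by simp [g, projIcc_of_mem hab hx]
  set w' : ℝ → ℝ := fun x => u a + ∫ t in a..x, g t
  have hw' : ∀ x, HasDerivAt w' (g x) x := fun x =>
    ((hg.integral_hasStrictDerivAt a x).hasDerivAt).const_add _
  set w : ℝ → ℝ := fun x => y a + ∫ t in a..x, w' t
  have hw'c : Continuous w' := continuous_iff_continuousAt.2 fun x => (hw' x).continuousAt
  have hw : ∀ x, HasDerivAt w (w' x) x := fun x =>
    ((hw'c.integral_hasStrictDerivAt a x).hasDerivAt).const_add _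
  have hderiv : deriv w = w' := funext fun x => (hw x).deriv
  have hderiv2 : deriv w' = g := funext fun x => (hw' x).deriv
  have hw'u : ∀ x ∈ Icc a b, w' x = u x :=
    eq_of_has_deriv_right_eq (fun x _ => (hw' x).hasDerivWithinAt)
      (fun x hx => by
        rw [hgv x (Ico_subset_Icc_self hx)]
        exact (hu x (Ico_subset_Icc_self hx)).hasDerivWithinAt_Ici_of_mem_Ico hx)
      hw'c.continuousOn (fun x hx => (hu x hx).continuousWithinAt) (by simp [w'])
  have hwy : ∀ x ∈ Icc a b, w x = y x :=
    eq_of_has_deriv_right_eq (fun x _ => (hw x).hasDerivWithinAt)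
      (fun x hx => by
        rw [hw'u x (Ico_subset_Icc_self hx)]
        exact (hy x (Ico_subset_Icc_self hx)).hasDerivWithinAt_Ici_of_mem_Ico hx)
      (continuous_iff_continuousAt.2 fun x => (hw x).continuousAt).continuousOn
      (fun x hx => (hy x hx).continuousWithinAt) (by simp [w])
  refine ⟨w, ?_, fun x hx =>
    ⟨hwy x hx, by rw [hderiv, hw'u x hx], by rw [hderiv, hderiv2, hgv x hx]⟩⟩
  rw [show (2 : WithTop ℕ∞) = 1 + 1 by norm_num, contDiff_succ_iff_deriv, hderiv,
    contDiff_one_iff_deriv, hderiv2]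
  exact ⟨fun x => (hw x).differentiableAt, by simp, fun x => (hw' x).differentiableAt, hg⟩

theorem monotoneOn_Icc_of_hasDerivAt_nonneg {f f' : ℝ → ℝ} {a b : ℝ}
    (hf : ContinuousOn f (Icc a b)) (hf' : ∀ x ∈ Ioo a b, HasDerivAt f (f' x) x)
    (hnonneg : ∀ x ∈ Ioo a b, 0 ≤ f' x) : MonotoneOn f (Icc a b) :=
  monotoneOn_of_hasDerivWithinAt_nonneg (convex_Icc a b) hf
    (by simpa only [interior_Icc] using fun x hx => (hf' x hx).hasDerivWithinAt)
    (by simpa only [interior_Icc] using hnonneg)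

theorem antitoneOn_Icc_of_hasDerivAt_nonpos {f f' : ℝ → ℝ} {a b : ℝ}
    (hf : ContinuousOn f (Icc a b)) (hf' : ∀ x ∈ Ioo a b, HasDerivAt f (f' x) x)
    (hnonpos : ∀ x ∈ Ioo a b, f' x ≤ 0) : AntitoneOn f (Icc a b) :=
  antitoneOn_of_hasDerivWithinAt_nonpos (convex_Icc a b) hf
    (by simpa only [interior_Icc] using fun x hx => (hf' x hx).hasDerivWithinAt)
    (by simpa only [interior_Icc] using hnonpos)

theorem AntitoneOn.lt_of_hasDerivAt_neg {f : ℝ → ℝ} {f' a b c : ℝ}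
    (hanti : AntitoneOn f (Icc a b)) (hc : c ∈ Ioo a b) (hf' : HasDerivAt f f' c) (hneg : f' < 0) :
    f b < f a := by
  have hab : a ≤ b := hc.1.le.trans hc.2.le
  refine (hanti (left_mem_Icc.2 hab) (right_mem_Icc.2 hab) hab).lt_of_ne fun heq => hneg.ne ?_
  -- otherwise `f` is constant on `[a, b]`, so its derivative at `c` vanishes
  have hconst : f =ᶠ[𝓝 c] fun _ => f a := by
    filter_upwards [Ioo_mem_nhds hc.1 hc.2] with x hx
    exact le_antisymm (hanti (left_mem_Icc.2 hab) (Ioo_subset_Icc_self hx) hx.1.le)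
      (heq ▸ hanti (Ioo_subset_Icc_self hx) (right_mem_Icc.2 hab) hx.2.le)
  exact hf'.unique ((hasDerivAt_const c (f a)).congr_of_eventuallyEq hconst)

theorem ContinuousOn.forall_Icc_pos_of_forall_Ico_pos {f : ℝ → ℝ} {a b : ℝ}
    (hf : ContinuousOn f (Icc a b))
    (hstep : ∀ x ∈ Icc a b, (∀ z ∈ Ico a x, 0 < f z) → 0 < f x) : ∀ x ∈ Icc a b, 0 < f x := by
  by_contra! hneg
  set S := Icc a b ∩ f ⁻¹' Iic 0
  have hS : IsClosed S := hf.preimage_isClosed_of_isClosed isClosed_Icc isClosed_Iic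
  have hSne : S.Nonempty := let ⟨x, hx, hfx⟩ := hneg; ⟨x, hx, hfx⟩
  have hSbdd : BddBelow S := ⟨a, fun z hz => hz.1.1⟩
  have hmem := hS.csInf_mem hSne hSbdd
  refine not_lt.2 hmem.2 (hstep _ hmem.1 fun z hz => ?_)
  by_contra! hfz
  exact (csInf_le hSbdd ⟨⟨hz.1, hz.2.le.trans hmem.1.2⟩, hfz⟩).not_gt hz.2

theorem hasDerivAt_exp_integral_mul {q F : ℝ → ℝ} {G : ℝ} (a : ℝ) {x : ℝ} (hq : Continuous q)
    (hF : HasDerivAt F (G - q x * F x) x) :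
    HasDerivAt (fun z => exp (∫ t in a..z, q t) * F z) (exp (∫ t in a..x, q t) * G) x :=
  (((hq.integral_hasStrictDerivAt a x).hasDerivAt.exp).mul hF).congr_deriv (by ring)

namespace SolvesOn

variable {p : ℝ} {q y u : ℝ → ℝ}

theorem mono {s t : Set ℝ} (h : SolvesOn p q y u s) (hts : t ⊆ s) : SolvesOn p q y u t :=
  fun x hx => ⟨(h x (hts hx)).1.mono hts, (h x (hts hx)).2.mono hts⟩

variable {a b : ℝ}

theorem continuousOn_fst (h : SolvesOn p q y u (Icc a b)) : ContinuousOn y (Icc a b) :=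
  fun x hx => (h x hx).1.continuousWithinAt

theorem continuousOn_snd (h : SolvesOn p q y u (Icc a b)) : ContinuousOn u (Icc a b) :=
  fun x hx => (h x hx).2.continuousWithinAt

theorem hasDerivAt_fst (h : SolvesOn p q y u (Icc a b)) {x : ℝ} (hx : x ∈ Ioo a b) :
    HasDerivAt y (u x) x :=
  (h x (Ioo_subset_Icc_self hx)).1.hasDerivAt (Icc_mem_nhds hx.1 hx.2)

theorem hasDerivAt_snd (h : SolvesOn p q y u (Icc a b)) {x : ℝ} (hx : x ∈ Ioo a b) :
    HasDerivAt u (p * y x - q x * u x) x :=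
  (h x (Ioo_subset_Icc_self hx)).2.hasDerivAt (Icc_mem_nhds hx.1 hx.2)

theorem snd_pos (h : SolvesOn p q y u (Icc a b)) (hp : 0 ≤ p) (hq : Continuous q) (hya : 0 ≤ y a)
    (hua : 0 < u a) : ∀ x ∈ Icc a b, 0 < u x := by
  refine h.continuousOn_snd.forall_Icc_pos_of_forall_Ico_pos fun x hx hpos => ?_
  have hsub : Icc a x ⊆ Icc a b := Icc_subset_Icc le_rfl hx.2
  have hsub' : Ioo a x ⊆ Ioo a b := Ioo_subset_Ioo le_rfl hx.2
  have hy : ∀ z ∈ Icc a x, 0 ≤ y z := fun z hz =>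
    hya.trans (monotoneOn_Icc_of_hasDerivAt_nonneg (h.continuousOn_fst.mono hsub)
      (fun w hw => h.hasDerivAt_fst (hsub' hw)) (fun w hw => (hpos w (Ioo_subset_Ico_self hw)).le)
      (left_mem_Icc.2 hx.1) hz hz.1)
  have hmono := monotoneOn_Icc_of_hasDerivAt_nonneg
    (f := fun z => exp (∫ t in a..z, q t) * u z)
    (((intervalIntegral.continuous_primitive hq.intervalIntegrable a).rexp.continuousOn).mul
      (h.continuousOn_snd.mono hsub))
    (fun z hz => hasDerivAt_exp_integral_mul a hq
      ((h.hasDerivAt_snd (hsub' hz)).congr_deriv (by ring)))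
    (fun z hz => mul_nonneg (exp_pos _).le (mul_nonneg hp (hy z (Ioo_subset_Icc_self hz))))
    (left_mem_Icc.2 hx.1) (right_mem_Icc.2 hx.1) hx.1
  simp only [intervalIntegral.integral_same, exp_zero, one_mul] at hmono
  exact pos_of_mul_pos_right (hua.trans_le hmono) (exp_pos _).le

theorem hasDerivAt_exp_integral_mul_snd_deriv (h : SolvesOn p q y u (Icc a b))
    (hq : Continuous q) {x q'x : ℝ} (hx : x ∈ Ioo a b) (hq' : HasDerivAt q q'x x) :
    HasDerivAt (fun z => exp (∫ t in a..z, q t) * (p * y z - q z * u z))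
      (exp (∫ t in a..x, q t) * ((p - q'x) * u x)) x :=
  hasDerivAt_exp_integral_mul a hq <|
    (((h.hasDerivAt_fst hx).const_mul p).sub (hq'.mul (h.hasDerivAt_snd hx))).congr_deriv (by ring)

theorem antitoneOn_exp_integral_mul_snd_deriv (h : SolvesOn p q y u (Icc a b))
    (hq : Continuous q) {q' : ℝ → ℝ} (hq' : ∀ x ∈ Ioo a b, HasDerivAt q (q' x) x)
    (hpq' : ∀ x ∈ Ioo a b, p ≤ q' x) (hu : ∀ x ∈ Icc a b, 0 < u x) :
    AntitoneOn (fun z => exp (∫ t in a..z, q t) * (p * y z - q z * u z)) (Icc a b) :=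
  antitoneOn_Icc_of_hasDerivAt_nonpos
    ((intervalIntegral.continuous_primitive hq.intervalIntegrable a).rexp.continuousOn.mul
      ((continuousOn_const.mul h.continuousOn_fst).sub (hq.continuousOn.mul h.continuousOn_snd)))
    (fun x hx => h.hasDerivAt_exp_integral_mul_snd_deriv hq hx (hq' x hx))
    (fun x hx => mul_nonpos_of_nonneg_of_nonpos (exp_pos _).le
      (mul_nonpos_of_nonpos_of_nonneg (sub_nonpos.2 (hpq' x hx))
        (hu x (Ioo_subset_Icc_self hx)).le))

theorem snd_deriv_nonpos (h : SolvesOn p q y u (Icc a b)) (hq : Continuous q) {q' : ℝ → ℝ}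
    (hq' : ∀ x ∈ Ioo a b, HasDerivAt q (q' x) x) (hpq' : ∀ x ∈ Ioo a b, p ≤ q' x)
    (hu : ∀ x ∈ Icc a b, 0 < u x) (ha : p * y a - q a * u a ≤ 0) :
    ∀ x ∈ Icc a b, p * y x - q x * u x ≤ 0 := fun x hx => by
  have := h.antitoneOn_exp_integral_mul_snd_deriv hq hq' hpq' hu
    (left_mem_Icc.2 (hx.1.trans hx.2)) hx hx.1
  simp only [intervalIntegral.integral_same, exp_zero, one_mul] at this
  exact nonpos_of_mul_nonpos_right (this.trans ha) (exp_pos _)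

theorem snd_deriv_neg_right (h : SolvesOn p q y u (Icc a b)) (hq : Continuous q) {q' : ℝ → ℝ}
    (hq' : ∀ x ∈ Ioo a b, HasDerivAt q (q' x) x) (hpq' : ∀ x ∈ Ioo a b, p ≤ q' x)
    (hu : ∀ x ∈ Icc a b, 0 < u x) (hab : a ≤ b) (ha : p * y a - q a * u a ≤ 0)
    (hstrict : p * y a - q a * u a < 0 ∨ ∃ c ∈ Ioo a b, p < q' c) :
    p * y b - q b * u b < 0 := by
  have hanti := h.antitoneOn_exp_integral_mul_snd_deriv hq hq' hpq' hu
  refine neg_of_mul_neg_right (a := exp (∫ t in a..b, q t)) ?_ (exp_pos _).le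
  rcases hstrict with ha' | ⟨c, hc, hpc⟩
  · exact (hanti (left_mem_Icc.2 hab) (right_mem_Icc.2 hab) hab).trans_lt (by simpa using ha')
  · exact (hanti.lt_of_hasDerivAt_neg hc (h.hasDerivAt_exp_integral_mul_snd_deriv hq hc (hq' c hc))
      (mul_neg_of_pos_of_neg (exp_pos _)
        (mul_neg_of_neg_of_pos (sub_neg.2 hpc) (hu c (Ioo_subset_Icc_self hc))))).trans_le
      (by simpa using ha)

theorem exists_snd_deriv_eq_zero {m T : ℝ} (h : SolvesOn p q y u (Icc 0 T)) (hp : 0 < p)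
    (hq : Continuous q) (hm : 0 ≤ m) (hmT : m < T) (hqT : q T = p * T) (hy0 : 0 ≤ y 0)
    (hF : ∀ x ∈ Icc 0 m, p * y x - q x * u x ≤ 0) (hFm : p * y m - q m * u m < 0) :
    ∃ b ∈ Ioo m T, p * y b - q b * u b = 0 := by
  by_contra! hne
  set F := fun x => p * y x - q x * u x
  have hFc : ContinuousOn F (Icc 0 T) :=
    (continuousOn_const.mul h.continuousOn_fst).sub (hq.continuousOn.mul h.continuousOn_snd)
  have hneg : ∀ x ∈ Ioo m T, F x < 0 := fun x hx => by
    by_contra! hx0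
    obtain ⟨c, hc, hc0⟩ := intermediate_value_Ioc hx.1.le
      (hFc.mono (Icc_subset_Icc hm hx.2.le)) ⟨hFm, hx0⟩
    exact hne c ⟨hc.1, hc.2.trans_lt hx.2⟩ hc0
  -- `x u - y` has derivative `x F`, so it is antitone, and strictly so on `(m, T)`
  have hφ : ∀ x ∈ Ioo 0 T, HasDerivAt (fun z => z * u z - y z) (x * F x) x := fun x hx =>
    (((hasDerivAt_id x).mul (h.hasDerivAt_snd hx)).sub (h.hasDerivAt_fst hx)).congr_deriv
      (by simp only [F, id_eq]; ring)
  have hanti := antitoneOn_Icc_of_hasDerivAt_nonpos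
    (continuousOn_id.mul h.continuousOn_snd |>.sub h.continuousOn_fst) hφ fun x hx =>
      mul_nonpos_of_nonneg_of_nonpos hx.1.le <|
        (le_or_gt x m).elim (fun hxm => hF x ⟨hx.1.le, hxm⟩) fun hxm => (hneg x ⟨hxm, hx.2⟩).le
  have hc : (m + T) / 2 ∈ Ioo m T := ⟨by linarith, by linarith⟩
  have hc' : (m + T) / 2 ∈ Ioo 0 T := ⟨hm.trans_lt hc.1, hc.2⟩
  have hφT := hanti.lt_of_hasDerivAt_neg hc' (hφ _ hc') (mul_neg_of_pos_of_neg hc'.1 (hneg _ hc))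
  have hFT : 0 < F T := by
    simp only [Pi.sub_apply, Pi.mul_apply, id_eq, zero_mul, zero_sub] at hφT
    simp only [F, hqT]
    nlinarith
  obtain ⟨b, hb, hb0⟩ := intermediate_value_Ioo hmT.le
    (hFc.mono (Icc_subset_Icc hm le_rfl)) ⟨hFm, hFT⟩
  exact hne b hb hb0

end SolvesOn

def drift (μ : ℝ) (α : ℝ → ℝ) (x : ℝ) : ℝ := μ - α (max (1 - x) 0)

section Drift

variable {μ : ℝ} {α : ℝ → ℝ}

theorem continuous_drift (hα : Continuous α) : Continuous (drift μ α) :=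
  continuous_const.sub (hα.comp ((continuous_const.sub continuous_id).max continuous_const))

theorem drift_zero : drift μ α 0 = μ - α 1 := by simp [drift]

theorem drift_of_one_le (hα0 : α 0 = 0) {x : ℝ} (hx : 1 ≤ x) : drift μ α x = μ := by
  simp [drift, max_eq_right (sub_nonpos.2 hx), hα0]

theorem hasDerivAt_drift (hα : Differentiable ℝ α) {x : ℝ} (hx : x < 1) :
    HasDerivAt (drift μ α) (deriv α (1 - x)) x := by
  have heq : (fun z => μ - α (1 - z)) =ᶠ[𝓝 x] drift μ α := by
    filter_upwards [Iio_mem_nhds hx] with z hz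
    rw [drift, max_eq_left (sub_nonneg.2 (le_of_lt hz))]
  refine (((hα _).hasDerivAt.comp x ((hasDerivAt_id x).const_sub 1)).const_sub μ
    |>.congr_of_eventuallyEq heq.symm).congr_deriv ?_
  simp

end Drift

theorem exists_shooting_point {μ κ r : ℝ} {α : ℝ → ℝ} (hκ : 0 < κ) (hr : 0 < r) (hμr : r < μ)
    (hα : ContDiff ℝ 1 α) (hα0 : α 0 = 0) (hα' : ∀ x ≥ (0:ℝ), r ≤ deriv α x) (hμα : α 1 ≤ μ) :
    ∃ b ∈ Ioo (1:ℝ) (μ / r), ∃ y u : ℝ → ℝ,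
      SolvesOn (κ * r) (fun x => κ * drift μ α x) y u (Icc 0 b) ∧ y 0 = 0 ∧ 0 < u b ∧
        κ * r * y b - κ * drift μ α b * u b = 0 := by
  set T := μ / r
  have hT : 1 < T := (one_lt_div hr).2 hμr
  set q := fun x => κ * drift μ α x
  have hq : Continuous q := continuous_const.mul (continuous_drift hα.continuous)
  obtain ⟨y, u, hy0, hu0, h⟩ := SolvesOn.exists (zero_le_one.trans hT.le) (κ * r) hq 0 1
  have hu : ∀ x ∈ Icc 0 T, 0 < u x := h.snd_pos (by positivity) hq hy0.ge (hu0 ▸ one_pos)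
  have h01 := h.mono (Icc_subset_Icc le_rfl hT.le)
  have hq' : ∀ x ∈ Ioo (0:ℝ) 1, HasDerivAt q (κ * deriv α (1 - x)) x := fun x hx =>
    (hasDerivAt_drift (hα.differentiable one_ne_zero) hx.2).const_mul κ
  have hpq' : ∀ x ∈ Ioo (0:ℝ) 1, κ * r ≤ κ * deriv α (1 - x) := fun x hx =>
    mul_le_mul_of_nonneg_left (hα' _ (by linarith [hx.2])) hκ.le
  have hu01 : ∀ x ∈ Icc (0:ℝ) 1, 0 < u x := fun x hx => hu x ⟨hx.1, hx.2.trans hT.le⟩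
  have hF0 : κ * r * y 0 - q 0 * u 0 = -(κ * (μ - α 1)) := by simp [q, hy0, hu0, drift_zero]
  have hF0' : κ * r * y 0 - q 0 * u 0 ≤ 0 :=
    hF0 ▸ neg_nonpos.2 (mul_nonneg hκ.le (sub_nonneg.2 hμα))
  have hF := h01.snd_deriv_nonpos hq hq' hpq' hu01 hF0'
  have hF1 : κ * r * y 1 - q 1 * u 1 < 0 := by
    refine h01.snd_deriv_neg_right hq hq' hpq' hu01 zero_le_one hF0' ?_
    rcases le_or_gt (α 1) r with h1 | h1
    · exact Or.inl (hF0 ▸ neg_neg_of_pos (mul_pos hκ (by linarith)))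
    -- the mean value theorem gives a point where `α' = α 1 > r`
    · obtain ⟨c, hc, hcα⟩ := exists_deriv_eq_slope α one_pos hα.continuous.continuousOn
        (hα.differentiable one_ne_zero).differentiableOn
      refine Or.inr ⟨1 - c, ⟨by linarith [hc.2], by linarith [hc.1]⟩, ?_⟩
      rw [sub_sub_cancel, hcα, hα0]
      simpa using mul_lt_mul_of_pos_left h1 hκ
  obtain ⟨b, hb, hFb⟩ := h.exists_snd_deriv_eq_zero (by positivity) hq zero_le_one hT
    (by simp [q, drift_of_one_le hα0 hT.le, T, mul_assoc, mul_div_cancel₀ _ hr.ne']) hy0.ge hF hF1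
  exact ⟨b, hb, y, u, h.mono (Icc_subset_Icc le_rfl hb.2.le), hy0,
    hu b ⟨zero_le_one.trans hb.1.le, hb.2.le⟩, hFb⟩

end

theorem stmt_9_general (μ σ r : ℝ) (hσ : 0 < σ) (hr : 0 < r) (hμr : r < μ)
    (α : ℝ → ℝ) (hα : ContDiff ℝ 1 α)
    (hα0 : α 0 = 0)
    (hα' : ∀ x ≥ (0:ℝ), r ≤ deriv α x) (hμα : α 1 ≤ μ) :
    ∃ b ∈ Ioo (1:ℝ) (μ / r), ∃ w : ℝ → ℝ, ContDiff ℝ 2 w ∧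
      (∀ x ∈ Icc (0:ℝ) b,
        r * w x = (μ - α (max (1 - x) 0)) * deriv w x + σ ^ 2 / 2 * deriv (deriv w) x) ∧
      deriv w b = 1 ∧ deriv (deriv w) b = 0 ∧ w 0 = 0 := by
  obtain ⟨b, hb, y, u, h, hy0, hub, hFb⟩ :=
    exists_shooting_point (κ := 2 / σ ^ 2) (by positivity) hr hμr hα hα0 hα' hμα
  have hb0 : (0:ℝ) ≤ b := zero_le_one.trans hb.1.le
  set k := (u b)⁻¹
  obtain ⟨w, hw, hwb⟩ := exists_contDiff_two_eqOn_Icc hb0 (fun x hx => (h x hx).1.const_mul k)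
    (fun x hx => (h x hx).2.const_mul k) (continuousOn_const.mul <|
      (continuousOn_const.mul h.continuousOn_fst).sub <|
        (continuous_const.mul (continuous_drift hα.continuous)).continuousOn.mul h.continuousOn_snd)
  refine ⟨b, hb, w, hw, fun x hx => ?_, ?_, ?_, ?_⟩
  · obtain ⟨h0, h1, h2⟩ := hwb x hx
    rw [h0, h1, h2, ← drift]
    field_simp
    ring
  · rw [(hwb b ⟨hb0, le_rfl⟩).2.1, inv_mul_cancel₀ hub.ne']
  · rw [(hwb b ⟨hb0, le_rfl⟩).2.2]
    linear_combination k * hFb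
  · rw [(hwb 0 ⟨le_rfl, hb0⟩).1, hy0, mul_zero]

theorem stmt_9 (μ σ r : ℝ) (hσ : 0 < σ) (hr : 0 < r) (hμr : r < μ)
    (α : ℝ → ℝ) (hα : ContDiff ℝ 1 α) (hαconv : ConvexOn ℝ (Ici 0) α)
    (hαmono : StrictMonoOn α (Ici 0)) (hα0 : α 0 = 0)
    (hα' : ∀ x ≥ (0:ℝ), r ≤ deriv α x) (hμα : α 1 ≤ μ) :
    ∃ b ∈ Ioo (1:ℝ) (μ / r), ∃ w : ℝ → ℝ, ContDiff ℝ 2 w ∧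
      (∀ x ∈ Icc (0:ℝ) b,
        r * w x = (μ - α (max (1 - x) 0)) * deriv w x + σ ^ 2 / 2 * deriv (deriv w) x) ∧
      deriv w b = 1 ∧ deriv (deriv w) b = 0 ∧ w 0 = 0 :=
  stmt_9_general μ σ r hσ hr hμr α hα hα0 hα' hμα
end

section
/- Assume μ > r and α(1) > μ. Let w = w_{b₀} be the solution of r w = (μ - α((1-x)^+))w' + (σ²/2)w'' on [0,b₀] with w(0)=0, w'(b₀)=1, w''(b₀)=0 and b₀ > 1, and assume w' > 0 on (0,b₀). Then w is convex-concave: there exists c ∈ (0,1) such that w'' > 0 on (0,c) and w'' < 0 on (c, b₀). -/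
/-!
Let `g` be the value of `w''` forced by the equation and `m x = μ - α ((1 - x)⁺)` the drift.
With the integrating factor `I = exp (∫ 2 m / σ²)`, the product `I g` has derivative
`I (2 / σ²) (r - m') w'`, whose sign is that of `r - m'`. On `[1, b]` the drift is constant, so
`I g` increases to `0` at `b` and `w'' < 0` on `[1, b)`. On `[0, 1]` we have
`m' = α' (1 - x) ≥ r` with `m'` nonincreasing in `x`: `I g` decreases, strictly until the point
after which `α' ≡ r` and it is constant. It is positive at `0` (because `α 1 > μ` and
`w' 0 > 0`) and negative at `1`, so it changes sign exactly once.
-/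

open Set

theorem strictAntiOn_Icc_of_hasDerivAt_mul {f k φ : ℝ → ℝ} {a b t : ℝ}
    (hf : ContinuousOn f (Icc a b)) (hf' : ∀ x ∈ Ioo a b, HasDerivAt f (k x * φ x) x)
    (hk : ∀ x ∈ Ioo a b, 0 < k x) (hφ : ∀ x ∈ Ioo a b, φ x ≤ 0)
    (hφm : MonotoneOn φ (Ioo a b)) (ht : t ≤ b) (hft : f b < f t) :
    StrictAntiOn f (Icc a t) := by
  refine strictAntiOn_of_deriv_neg (convex_Icc a t) (hf.mono (Icc_subset_Icc_right ht))
    fun y hy => ?_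
  rw [interior_Icc] at hy
  have hyab : y ∈ Ioo a b := ⟨hy.1, hy.2.trans_le ht⟩
  rw [(hf' y hyab).deriv]
  refine mul_neg_of_pos_of_neg (hk y hyab) ((hφ y hyab).lt_of_ne fun hφy => hft.not_ge ?_)
  -- a monotone `φ ≤ 0` that vanishes at `y` stays `0`, so `f` cannot decrease after `y`
  have hφ0 : ∀ z ∈ Ioo y b, φ z = 0 := fun z hz =>
    le_antisymm (hφ z ⟨hyab.1.trans hz.1, hz.2⟩) (hφy ▸ hφm hyab ⟨hyab.1.trans hz.1, hz.2⟩ hz.1.le)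
  have hmono : MonotoneOn f (Icc y b) := by
    refine monotoneOn_of_deriv_nonneg (convex_Icc y b) (hf.mono (Icc_subset_Icc_left hy.1.le))
      ?_ ?_ <;> rw [interior_Icc]
    · exact fun z hz => (hf' z ⟨hyab.1.trans hz.1, hz.2⟩).differentiableAt.differentiableWithinAt
    · exact fun z hz => by rw [(hf' z ⟨hyab.1.trans hz.1, hz.2⟩).deriv, hφ0 z hz, mul_zero]
  exact hmono ⟨hy.2.le, ht⟩ ⟨hyab.2.le, le_rfl⟩ ht

theorem exists_sign_change_of_hasDerivAt_mul {f k φ : ℝ → ℝ} {a b : ℝ} (hab : a ≤ b)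
    (hf : ContinuousOn f (Icc a b)) (hf' : ∀ x ∈ Ioo a b, HasDerivAt f (k x * φ x) x)
    (hk : ∀ x ∈ Ioo a b, 0 < k x) (hφ : ∀ x ∈ Ioo a b, φ x ≤ 0)
    (hφm : MonotoneOn φ (Ioo a b)) (ha : 0 < f a) (hb : f b < 0) :
    ∃ c ∈ Ioo a b, (∀ x ∈ Ico a c, 0 < f x) ∧ ∀ x ∈ Ioc c b, f x < 0 := by
  obtain ⟨c, hc, hfc⟩ := intermediate_value_Ioo' hab hf ⟨hb, ha⟩
  have hanti {t : ℝ} (ht : t ≤ b) (hft : f b < f t) : StrictAntiOn f (Icc a t) :=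
    strictAntiOn_Icc_of_hasDerivAt_mul hf hf' hk hφ hφm ht hft
  refine ⟨c, hc, fun x hx => ?_, fun x hx => ?_⟩
  · exact hfc ▸ hanti hc.2.le (hfc ▸ hb) ⟨hx.1, hx.2.le⟩ ⟨hx.1.trans hx.2.le, le_rfl⟩ hx.2
  · rcases le_or_gt (f x) (f b) with h | h
    · exact h.trans_lt hb
    · exact hfc ▸ hanti hx.2 h ⟨hc.1.le, hx.1.le⟩ ⟨hc.1.le.trans hx.1.le, le_rfl⟩ hx.1

section ODE

variable {σ r : ℝ} {m m' w : ℝ → ℝ} {a b : ℝ}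

/-- The value of `w''` dictated by `r w = m w' + (σ² / 2) w''`; unlike `deriv (deriv w)`, it is
differentiable when `w` is only twice differentiable. -/
noncomputable def odeSecondDeriv (σ r : ℝ) (m w : ℝ → ℝ) (x : ℝ) : ℝ :=
  2 / σ ^ 2 * (r * w x - m x * deriv w x)

noncomputable def integratingFactor (σ : ℝ) (m : ℝ → ℝ) (a x : ℝ) : ℝ :=
  Real.exp (∫ t in a..x, 2 / σ ^ 2 * m t)

theorem deriv_deriv_eq_odeSecondDeriv {x : ℝ} (hσ : σ ≠ 0)
    (h : r * w x = m x * deriv w x + σ ^ 2 / 2 * deriv (deriv w) x) :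
    deriv (deriv w) x = odeSecondDeriv σ r m w x := by
  unfold odeSecondDeriv
  field_simp
  linarith

theorem integratingFactor_pos (x : ℝ) : 0 < integratingFactor σ m a x :=
  Real.exp_pos _

theorem hasDerivAt_integratingFactor (hm : Continuous m) (x : ℝ) :
    HasDerivAt (integratingFactor σ m a) (integratingFactor σ m a x * (2 / σ ^ 2 * m x)) x :=
  ((continuous_const.mul hm).integral_hasStrictDerivAt a x).hasDerivAt.exp

theorem hasDerivAt_odeSecondDeriv {x m'x : ℝ} (hmx : HasDerivAt m m'x x)
    (hw₁ : DifferentiableAt ℝ w x) (hw₂ : DifferentiableAt ℝ (deriv w) x) :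
    HasDerivAt (odeSecondDeriv σ r m w)
      (2 / σ ^ 2 * (r * deriv w x - (m'x * deriv w x + m x * deriv (deriv w) x))) x :=
  ((hw₁.hasDerivAt.const_mul r).sub (hmx.mul hw₂.hasDerivAt)).const_mul _

theorem continuous_integratingFactor_mul_odeSecondDeriv (hm : Continuous m)
    (hw₁ : Continuous w) (hw₂ : Continuous (deriv w)) :
    Continuous (fun y => integratingFactor σ m a y * odeSecondDeriv σ r m w y) := by
  have hI : Continuous (integratingFactor σ m a) := continuous_iff_continuousAt.2 fun x =>
    (hasDerivAt_integratingFactor hm x).continuousAt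
  unfold odeSecondDeriv
  exact hI.mul (continuous_const.mul ((continuous_const.mul hw₁).sub (hm.mul hw₂)))

theorem hasDerivAt_integratingFactor_mul_odeSecondDeriv {x m'x : ℝ} (hm : Continuous m)
    (hmx : HasDerivAt m m'x x) (hw₁ : Differentiable ℝ w) (hw₂ : Differentiable ℝ (deriv w))
    (hx : deriv (deriv w) x = odeSecondDeriv σ r m w x) :
    HasDerivAt (fun y => integratingFactor σ m a y * odeSecondDeriv σ r m w y)
      (integratingFactor σ m a x * (2 / σ ^ 2) * deriv w x * (r - m'x)) x := by
  refine ((hasDerivAt_integratingFactor hm x).mul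
    (hasDerivAt_odeSecondDeriv (r := r) hmx (hw₁ x) (hw₂ x))).congr_deriv ?_
  rw [hx, odeSecondDeriv]
  ring

theorem odeSecondDeriv_neg_of_lt (hσ : σ ≠ 0) (hm : Continuous m)
    (hm' : ∀ x ∈ Ioo a b, HasDerivAt m (m' x) x) (hm'r : ∀ x ∈ Ioo a b, m' x < r)
    (hw₁ : Differentiable ℝ w) (hw₂ : Differentiable ℝ (deriv w))
    (hode : ∀ x ∈ Ioo a b, deriv (deriv w) x = odeSecondDeriv σ r m w x)
    (hpos : ∀ x ∈ Ioo a b, 0 < deriv w x) (hb : odeSecondDeriv σ r m w b = 0) :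
    ∀ x ∈ Ico a b, odeSecondDeriv σ r m w x < 0 := by
  have hW : StrictMonoOn (fun y => integratingFactor σ m a y * odeSecondDeriv σ r m w y)
      (Icc a b) := by
    refine strictMonoOn_of_deriv_pos (convex_Icc a b)
      (continuous_integratingFactor_mul_odeSecondDeriv hm hw₁.continuous
        hw₂.continuous).continuousOn fun x hx => ?_
    rw [interior_Icc] at hx
    rw [(hasDerivAt_integratingFactor_mul_odeSecondDeriv hm (hm' x hx) hw₁ hw₂
      (hode x hx)).deriv]
    have := integratingFactor_pos (σ := σ) (m := m) (a := a) x
    have := hpos x hx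
    have := sub_pos.2 (hm'r x hx)
    positivity
  intro x hx
  have hWx : integratingFactor σ m a x * odeSecondDeriv σ r m w x < 0 := by
    simpa only [hb, mul_zero] using hW ⟨hx.1, hx.2.le⟩ ⟨hx.1.trans hx.2.le, le_rfl⟩ hx.2
  exact neg_of_mul_neg_right hWx (integratingFactor_pos x).le

theorem odeSecondDeriv_nonpos_of_le (hab : a ≤ b) (hm : Continuous m)
    (hm' : ∀ x ∈ Ioo a b, HasDerivAt m (m' x) x) (hrm' : ∀ x ∈ Ioo a b, r ≤ m' x)
    (hw₁ : Differentiable ℝ w) (hw₂ : Differentiable ℝ (deriv w))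
    (hode : ∀ x ∈ Ioo a b, deriv (deriv w) x = odeSecondDeriv σ r m w x)
    (hpos : ∀ x ∈ Ioo a b, 0 < deriv w x) (ha : odeSecondDeriv σ r m w a ≤ 0) :
    ∀ x ∈ Icc a b, odeSecondDeriv σ r m w x ≤ 0 := by
  have hW : AntitoneOn (fun y => integratingFactor σ m a y * odeSecondDeriv σ r m w y)
      (Icc a b) := by
    have hW' (x) (hx : x ∈ Ioo a b) := hasDerivAt_integratingFactor_mul_odeSecondDeriv
      (a := a) hm (hm' x hx) hw₁ hw₂ (hode x hx)
    refine antitoneOn_of_deriv_nonpos (convex_Icc a b)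
      (continuous_integratingFactor_mul_odeSecondDeriv hm hw₁.continuous
        hw₂.continuous).continuousOn ?_ ?_ <;> rw [interior_Icc]
    · exact fun x hx => (hW' x hx).differentiableAt.differentiableWithinAt
    · intro x hx
      rw [(hW' x hx).deriv]
      exact mul_nonpos_of_nonneg_of_nonpos
        (by have := integratingFactor_pos (σ := σ) (m := m) (a := a) x
            have := hpos x hx
            positivity)
        (sub_nonpos.2 (hrm' x hx))
  intro x hx
  have hWx := (hW ⟨le_rfl, hab⟩ hx hx.1).trans
    (mul_nonpos_of_nonneg_of_nonpos (integratingFactor_pos a).le ha)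
  exact nonpos_of_mul_nonpos_right hWx (integratingFactor_pos x)

/-- If `w' (a) = 0`, then `w'' ≤ 0` on `[a, b]` and `w'` could not be positive at `b`. -/
theorem deriv_pos_of_odeSecondDeriv (hab : a < b) (hm : Continuous m)
    (hm' : ∀ x ∈ Ioo a b, HasDerivAt m (m' x) x) (hrm' : ∀ x ∈ Ioo a b, r ≤ m' x)
    (hw₁ : Differentiable ℝ w) (hw₂ : Differentiable ℝ (deriv w))
    (hode : ∀ x ∈ Ioo a b, deriv (deriv w) x = odeSecondDeriv σ r m w x)
    (hpos : ∀ x ∈ Ioc a b, 0 < deriv w x) (hwa : w a = 0) : 0 < deriv w a := by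
  have hnonneg : 0 ≤ deriv w a :=
    ge_of_tendsto ((hw₂.continuous.tendsto a).mono_left nhdsWithin_le_nhds)
      (Filter.mem_of_superset (Ioc_mem_nhdsGT hab) fun x hx => (hpos x hx).le)
  refine hnonneg.lt_of_ne fun h0 => (hpos b ⟨hab, le_rfl⟩).not_ge ?_
  have hg := odeSecondDeriv_nonpos_of_le hab.le hm hm' hrm' hw₁ hw₂ hode
    (fun x hx => hpos x (Ioo_subset_Ioc_self hx)) (by simp [odeSecondDeriv, hwa, ← h0])
  have hw' : AntitoneOn (deriv w) (Icc a b) := by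
    refine antitoneOn_of_deriv_nonpos (convex_Icc a b) hw₂.continuous.continuousOn
      hw₂.differentiableOn fun x hx => ?_
    rw [interior_Icc] at hx
    exact hode x hx ▸ hg x (Ioo_subset_Icc_self hx)
  exact h0 ▸ hw' ⟨le_rfl, hab.le⟩ ⟨hab.le, le_rfl⟩ hab.le

theorem exists_sign_change_odeSecondDeriv (hσ : σ ≠ 0) (hab : a ≤ b) (hm : Continuous m)
    (hm' : ∀ x ∈ Ioo a b, HasDerivAt m (m' x) x) (hrm' : ∀ x ∈ Ioo a b, r ≤ m' x)
    (hm'anti : AntitoneOn m' (Ioo a b))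
    (hw₁ : Differentiable ℝ w) (hw₂ : Differentiable ℝ (deriv w))
    (hode : ∀ x ∈ Ioo a b, deriv (deriv w) x = odeSecondDeriv σ r m w x)
    (hpos : ∀ x ∈ Ioo a b, 0 < deriv w x)
    (ha : 0 < odeSecondDeriv σ r m w a) (hb : odeSecondDeriv σ r m w b < 0) :
    ∃ c ∈ Ioo a b, (∀ x ∈ Ico a c, 0 < odeSecondDeriv σ r m w x) ∧
      ∀ x ∈ Ioc c b, odeSecondDeriv σ r m w x < 0 := by
  have hI (x : ℝ) := integratingFactor_pos (σ := σ) (m := m) (a := a) x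
  obtain ⟨c, hc, hplus, hminus⟩ := exists_sign_change_of_hasDerivAt_mul (φ := fun x => r - m' x)
    hab (continuous_integratingFactor_mul_odeSecondDeriv hm hw₁.continuous
      hw₂.continuous).continuousOn
    (fun x hx => hasDerivAt_integratingFactor_mul_odeSecondDeriv hm (hm' x hx) hw₁ hw₂ (hode x hx))
    (fun x hx => by have := hI x; have := hpos x hx; positivity)
    (fun x hx => sub_nonpos.2 (hrm' x hx))
    (fun x hx y hy hxy => sub_le_sub_left (hm'anti hx hy hxy) r)
    (mul_pos (hI a) ha) (mul_neg_of_pos_of_neg (hI b) hb)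
  exact ⟨c, hc, fun x hx => (mul_pos_iff_of_pos_left (hI x)).1 (hplus x hx),
    fun x hx => neg_of_mul_neg_right (hminus x hx) (hI x).le⟩

end ODE

theorem hasDerivAt_drift_of_lt_one {α : ℝ → ℝ} (μ : ℝ) {x : ℝ}
    (hα : DifferentiableAt ℝ α (1 - x)) (hx : x < 1) :
    HasDerivAt (fun y => μ - α (max (1 - y) 0)) (deriv α (1 - x)) x := by
  have h : HasDerivAt (fun y => μ - α (1 - y)) (deriv α (1 - x)) x :=
    ((hα.hasDerivAt.comp x ((hasDerivAt_id x).const_sub 1)).const_sub μ).congr_deriv (by simp)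
  refine h.congr_of_eventuallyEq ?_
  filter_upwards [Iio_mem_nhds hx] with y hy
  rw [max_eq_left (sub_nonneg.2 (le_of_lt hy))]

theorem hasDerivAt_drift_of_one_lt {α : ℝ → ℝ} (μ : ℝ) {x : ℝ} (hα0 : α 0 = 0) (hx : 1 < x) :
    HasDerivAt (fun y => μ - α (max (1 - y) 0)) 0 x := by
  refine (hasDerivAt_const x μ).congr_of_eventuallyEq ?_
  filter_upwards [Ioi_mem_nhds hx] with y hy
  rw [max_eq_right (sub_nonpos.2 (le_of_lt hy)), hα0, sub_zero]

theorem antitoneOn_deriv_one_sub {α : ℝ → ℝ} (hα : Differentiable ℝ α)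
    (hαconv : ConvexOn ℝ (Ici 0) α) : AntitoneOn (fun x => deriv α (1 - x)) (Iic 1) :=
  fun _ hx _ hy hxy => hαconv.monotoneOn_deriv (fun z _ => hα z) (mem_Ici.2 (sub_nonneg.2 hy))
    (mem_Ici.2 (sub_nonneg.2 hx)) (sub_le_sub_left hxy 1)

theorem stmt_11_general (μ σ r : ℝ) (hσ : 0 < σ) (hr : 0 < r)
    (α : ℝ → ℝ) (hα : ContDiff ℝ 1 α) (hαconv : ConvexOn ℝ (Ici 0) α)
    (hα0 : α 0 = 0)
    (hα' : ∀ x ≥ (0:ℝ), r ≤ deriv α x) (hαμ : μ < α 1)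
    (b : ℝ) (hb : 1 < b) (w : ℝ → ℝ) (hw : ContDiff ℝ 2 w)
    (hode : ∀ x ∈ Icc (0:ℝ) b,
      r * w x = (μ - α (max (1 - x) 0)) * deriv w x + σ ^ 2 / 2 * deriv (deriv w) x)
    (hw0 : w 0 = 0) (hw''b : deriv (deriv w) b = 0)
    (hw' : ∀ x ∈ Ioo (0:ℝ) b, 0 < deriv w x) :
    ∃ c ∈ Ioo (0:ℝ) 1, (∀ x ∈ Ioo (0:ℝ) c, 0 < deriv (deriv w) x) ∧
      (∀ x ∈ Ioo c b, deriv (deriv w) x < 0) := by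
  set m : ℝ → ℝ := fun x => μ - α (max (1 - x) 0)
  have hαd : Differentiable ℝ α := hα.differentiable one_ne_zero
  have hm : Continuous m := by fun_prop
  have hw₁ : Differentiable ℝ w := hw.differentiable two_ne_zero
  have hw₂ : Differentiable ℝ (deriv w) := hw.differentiable_deriv_two
  have hg (x) (hx : x ∈ Icc 0 b) : deriv (deriv w) x = odeSecondDeriv σ r m w x :=
    deriv_deriv_eq_odeSecondDeriv hσ.ne' (hode x hx)
  have hright : ∀ x ∈ Ico 1 b, odeSecondDeriv σ r m w x < 0 :=
    odeSecondDeriv_neg_of_lt (m' := fun _ => 0) hσ.ne' hm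
      (fun x hx => hasDerivAt_drift_of_one_lt μ hα0 hx.1) (fun _ _ => hr) hw₁ hw₂
      (fun x hx => hg x ⟨by linarith [hx.1], hx.2.le⟩)
      (fun x hx => hw' x ⟨by linarith [hx.1], hx.2⟩)
      (hg b ⟨by linarith, le_rfl⟩ ▸ hw''b)
  have hm' (x) (hx : x ∈ Ioo (0:ℝ) 1) : HasDerivAt m (deriv α (1 - x)) x :=
    hasDerivAt_drift_of_lt_one μ (hαd _) hx.2
  have hrm' (x) (hx : x ∈ Ioo (0:ℝ) 1) : r ≤ deriv α (1 - x) := hα' _ (by linarith [hx.2])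
  have hm'anti : AntitoneOn (fun x => deriv α (1 - x)) (Ioo 0 1) :=
    (antitoneOn_deriv_one_sub hαd hαconv).mono fun x hx => hx.2.le
  have hgleft (x) (hx : x ∈ Ioo (0:ℝ) 1) := hg x ⟨hx.1.le, by linarith [hx.2]⟩
  have hw'left (x) (hx : x ∈ Ioc (0:ℝ) 1) : 0 < deriv w x := hw' x ⟨hx.1, by linarith [hx.2]⟩
  have hw'0 : 0 < deriv w 0 := deriv_pos_of_odeSecondDeriv one_pos hm hm' hrm' hw₁ hw₂ hgleft
    hw'left hw0
  have hg0 : 0 < odeSecondDeriv σ r m w 0 := by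
    have hα1 : 0 < α 1 - μ := sub_pos.2 hαμ
    have hg0 : odeSecondDeriv σ r m w 0 = 2 / σ ^ 2 * ((α 1 - μ) * deriv w 0) := by
      simp only [odeSecondDeriv, m, hw0]
      norm_num
      ring
    rw [hg0]
    positivity
  obtain ⟨c, hc, hplus, hminus⟩ := exists_sign_change_odeSecondDeriv hσ.ne' zero_le_one hm hm'
    hrm' hm'anti hw₁ hw₂ hgleft (fun x hx => hw'left x (Ioo_subset_Ioc_self hx)) hg0
    (hright 1 ⟨le_rfl, hb⟩)
  refine ⟨c, hc, fun x hx => ?_, fun x hx => ?_⟩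
  · rw [hg x ⟨hx.1.le, by linarith [hx.2, hc.2]⟩]
    exact hplus x ⟨hx.1.le, hx.2⟩
  · rw [hg x ⟨by linarith [hx.1, hc.1], hx.2.le⟩]
    rcases le_or_gt x 1 with h | h
    · exact hminus x ⟨hx.1, h⟩
    · exact hright x ⟨h.le, hx.2⟩

theorem stmt_11 (μ σ r : ℝ) (hσ : 0 < σ) (hr : 0 < r) (hμr : r < μ)
    (α : ℝ → ℝ) (hα : ContDiff ℝ 1 α) (hαconv : ConvexOn ℝ (Ici 0) α)
    (hαmono : StrictMonoOn α (Ici 0)) (hα0 : α 0 = 0)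
    (hα' : ∀ x ≥ (0:ℝ), r ≤ deriv α x) (hαμ : μ < α 1)
    (b : ℝ) (hb : 1 < b) (w : ℝ → ℝ) (hw : ContDiff ℝ 2 w)
    (hode : ∀ x ∈ Icc (0:ℝ) b,
      r * w x = (μ - α (max (1 - x) 0)) * deriv w x + σ ^ 2 / 2 * deriv (deriv w) x)
    (hw0 : w 0 = 0) (hw'b : deriv w b = 1) (hw''b : deriv (deriv w) b = 0)
    (hw' : ∀ x ∈ Ioo (0:ℝ) b, 0 < deriv w x) :
    ∃ c ∈ Ioo (0:ℝ) 1, (∀ x ∈ Ioo (0:ℝ) c, 0 < deriv (deriv w) x) ∧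
      (∀ x ∈ Ioo c b, deriv (deriv w) x < 0) :=
  stmt_11_general μ σ r hσ hr α hα hαconv hα0 hα' hαμ b hb w hw hode hw0 hw''b hw'
end

section
/- Let a ∈ (0,1), and let w = w_{b_a} solve r w = (μ - α((1-x)^+))w' + (σ²/2)w'' on [a, b_a] with w(a)=a, w'(a)=1, w'(b_a)=1, w''(b_a)=0, b_a > 1, and suppose w is convex-concave on [a,b_a]. Then w'(x) > 1 for all x ∈ (a, b_a), hence w(x) > x on (a, b_a], and b_a < μ/r. -/
/-! Convex-concavity makes `w'` strictly increase on `[a, c]` and strictly decrease on `[c, b]`,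
so `w'` stays above its common boundary value `1` inside `(a, b)`; by the mean value theorem
`w x - x > w a - a = 0`. At `b` the ODE collapses to `r * w b = μ` because `α 0 = 0`,
`w' b = 1` and `w'' b = 0`, hence `μ / r = w b > b`. -/

open Set

theorem lt_of_deriv_pos_of_deriv_neg {g : ℝ → ℝ} {a b c m : ℝ} (hg : Continuous g)
    (hpos : ∀ x ∈ Ioo a c, 0 < deriv g x) (hneg : ∀ x ∈ Ioo c b, deriv g x < 0)
    (ha : m ≤ g a) (hb : m ≤ g b) : ∀ x ∈ Ioo a b, m < g x := by
  have hup : StrictMonoOn g (Icc a c) :=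
    strictMonoOn_of_deriv_pos (convex_Icc a c) hg.continuousOn
      (by rwa [interior_Icc])
  have hdown : StrictAntiOn g (Icc c b) :=
    strictAntiOn_of_deriv_neg (convex_Icc c b) hg.continuousOn
      (by rwa [interior_Icc])
  intro x hx
  rcases le_or_gt x c with hxc | hcx
  · exact ha.trans_lt (hup ⟨le_rfl, hx.1.le.trans hxc⟩ ⟨hx.1.le, hxc⟩ hx.1)
  · exact hb.trans_lt (hdown ⟨hcx.le, hx.2.le⟩ ⟨hcx.le.trans hx.2.le, le_rfl⟩ hx.2)

theorem stmt_13_general (μ σ r : ℝ) (hr : 0 < r)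
    (α : ℝ → ℝ) (hα0 : α 0 = 0)
    (a b : ℝ) (hb : 1 < b) (hab : a < b)
    (w : ℝ → ℝ) (hw : ContDiff ℝ 2 w)
    (hode : ∀ x ∈ Icc a b,
      r * w x = (μ - α (max (1 - x) 0)) * deriv w x + σ ^ 2 / 2 * deriv (deriv w) x)
    (hwa : w a = a) (hw'a : deriv w a = 1)
    (hw'b : deriv w b = 1) (hw''b : deriv (deriv w) b = 0)
    (hcc : ∃ c ∈ Ioo a b, (∀ x ∈ Ioo a c, 0 < deriv (deriv w) x) ∧
      (∀ x ∈ Ioo c b, deriv (deriv w) x < 0)) :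
    (∀ x ∈ Ioo a b, 1 < deriv w x) ∧ (∀ x ∈ Ioc a b, x < w x) ∧ b < μ / r := by
  obtain ⟨c, -, hconvex, hconcave⟩ := hcc
  have hslope : ∀ x ∈ Ioo a b, 1 < deriv w x :=
    lt_of_deriv_pos_of_deriv_neg (hw.continuous_deriv (by norm_num)) hconvex hconcave
      hw'a.ge hw'b.ge
  have habove : ∀ x ∈ Ioc a b, x < w x := by
    intro x hx
    have := (convex_Icc a b).mul_sub_lt_image_sub_of_lt_deriv hw.continuous.continuousOn
      (hw.differentiable (by norm_num)).differentiableOn (by rwa [interior_Icc])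
      a ⟨le_rfl, hab.le⟩ x ⟨hx.1.le, hx.2⟩ hx.1
    linarith
  have hwb : r * w b = μ := by
    have := hode b ⟨hab.le, le_rfl⟩
    rwa [max_eq_right (by linarith), hα0, hw'b, hw''b, sub_zero, mul_one, mul_zero,
      add_zero] at this
  refine ⟨hslope, habove, ?_⟩
  rw [lt_div_iff₀ hr]
  nlinarith [habove b ⟨hab, le_rfl⟩]

theorem stmt_13 (μ σ r : ℝ) (hσ : 0 < σ) (hr : 0 < r) (hμr : r < μ)
    (α : ℝ → ℝ) (hα : ContDiff ℝ 1 α) (hαconv : ConvexOn ℝ (Ici 0) α)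
    (hαmono : StrictMonoOn α (Ici 0)) (hα0 : α 0 = 0)
    (hα' : ∀ x ≥ (0:ℝ), r ≤ deriv α x)
    (a b : ℝ) (ha : a ∈ Ioo (0:ℝ) 1) (hb : 1 < b) (hab : a < b)
    (w : ℝ → ℝ) (hw : ContDiff ℝ 2 w)
    (hode : ∀ x ∈ Icc a b,
      r * w x = (μ - α (max (1 - x) 0)) * deriv w x + σ ^ 2 / 2 * deriv (deriv w) x)
    (hwa : w a = a) (hw'a : deriv w a = 1)
    (hw'b : deriv w b = 1) (hw''b : deriv (deriv w) b = 0)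
    (hcc : ∃ c ∈ Ioo a b, (∀ x ∈ Ioo a c, 0 < deriv (deriv w) x) ∧
      (∀ x ∈ Ioo c b, deriv (deriv w) x < 0)) :
    (∀ x ∈ Ioo a b, 1 < deriv w x) ∧ (∀ x ∈ Ioc a b, x < w x) ∧ b < μ / r :=
  stmt_13_general μ σ r hr α hα0 a b hb hab w hw hode hwa hw'a hw'b hw''b hcc
end

section
/- Let w be a C² solution on (0,∞) of μβ(x)w'(x) + (σ²β(x)²/2)w''(x) - r w(x) = 0 on (a,∞) with w equal to A x^δ on (0,a] (δ = 2rσ²/(μ²+2rσ²), A > 0), where β is increasing, concave, positive on (0,∞) with finite limit β̄ and σ²(1-δ)β(a) = μa. If w is increasing on [a,∞), then there exists b > a such that w''(b) = 0; moreover w''(a) = -2rAa^δ/(σ²β(a)²) < 0 and w is concave on (a, b) where b = inf{x ≥ a : w''(x) = 0}. -/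
/-!
At the pasting point `a` the ODE extends by continuity, and the relation between `β a` and `δ`
makes the drift term `μ β(a) w'(a)` equal to `2 r w(a)`, which gives the value (and sign) of
`w''(a)`. If `w''` had no zero on `(a, ∞)` it would stay negative, so `w` would be increasing and
concave there. Concavity gives `w x ≥ w a + w'(x) (x - a)`, hence
`r w x - μ β x w'(x) ≥ r w a + w'(x) (r (x - a) - μ β̄) > 0` once `x - a ≥ μ β̄ / r`; the ODE then
forces `w''(x) > 0`, a contradiction. Negativity before the first zero is the intermediate value
theorem.
-/

open Set Filter Topology

theorem deriv_eq_of_hasDerivAt_of_eqOn_Ioc {f g : ℝ → ℝ} {b a g' : ℝ} (hba : b < a)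
    (hf : DifferentiableAt ℝ f a) (hg : HasDerivAt g g' a) (hfg : EqOn f g (Ioc b a)) :
    deriv f a = g' := by
  have hfg' : f =ᶠ[𝓝[≤] a] g :=
    eventuallyEq_of_mem (Ioc_mem_nhdsLE hba) hfg
  exact (uniqueDiffWithinAt_Iic a).eq_deriv _ hf.hasDerivAt.hasDerivWithinAt
    (hg.hasDerivWithinAt.congr_of_eventuallyEq hfg' (hfg ⟨hba, le_rfl⟩))

theorem ContinuousAt.eq_zero_of_forall_gt {F : ℝ → ℝ} {a : ℝ} (hF : ContinuousAt F a)
    (h : ∀ x > a, F x = 0) : F a = 0 :=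
  tendsto_nhds_unique (l := 𝓝[>] a) (hF.tendsto.mono_left nhdsWithin_le_nhds)
    (tendsto_const_nhds.congr' (eventuallyEq_of_mem self_mem_nhdsWithin fun x hx => (h x hx).symm))

theorem MonotoneOn.le_of_tendsto_atTop {α β : Type*} [Preorder α] [IsDirectedOrder α]
    [Nonempty α] [TopologicalSpace β] [Preorder β] [OrderClosedTopology β] {f : α → β} {c x : α}
    {L : β} (hf : MonotoneOn f (Ici c)) (hL : Tendsto f atTop (𝓝 L)) (hx : c ≤ x) : f x ≤ L :=
  ge_of_tendsto hL <| (eventually_ge_atTop x).mono fun _ hy => hf hx (hx.trans hy) hy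

theorem neg_of_continuousOn_Icc_of_ne_zero {f : ℝ → ℝ} {a x : ℝ} (hax : a ≤ x)
    (hf : ContinuousOn f (Icc a x)) (ha : f a < 0) (hne : ∀ c ∈ Ioc a x, f c ≠ 0) : f x < 0 := by
  by_contra! hx
  obtain ⟨c, hc, hc0⟩ := intermediate_value_Icc hax hf ⟨ha.le, hx⟩
  rcases hc.1.eq_or_lt with rfl | hac
  · exact ha.ne hc0
  · exact hne c ⟨hac, hc.2⟩ hc0

theorem neg_of_lt_sInf_zeros {f : ℝ → ℝ} {a : ℝ} (hf : ContinuousOn f (Ici a)) (ha : f a < 0) :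
    ∀ x ∈ Ioo a (sInf {x | a ≤ x ∧ f x = 0}), f x < 0 := by
  intro x hx
  refine neg_of_continuousOn_Icc_of_ne_zero hx.1.le (hf.mono Icc_subset_Ici_self) ha ?_
  intro c hc hc0
  have : sInf {x | a ≤ x ∧ f x = 0} ≤ c := csInf_le ⟨a, fun _ hy => hy.1⟩ ⟨hc.1.le, hc0⟩
  linarith [hx.2, hc.2]

theorem drift_mul_exponent_eq {μ σ r δ b a : ℝ} (hμ : μ ≠ 0) (hσ : σ ≠ 0) (hr : 0 < r)
    (hδ : δ = 2 * r * σ ^ 2 / (μ ^ 2 + 2 * r * σ ^ 2)) (hrel : σ ^ 2 * (1 - δ) * b = μ * a) :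
    μ * b * δ = 2 * r * a := by
  have hden : 0 < μ ^ 2 + 2 * r * σ ^ 2 := by positivity
  have h1δ : 1 - δ = μ ^ 2 / (μ ^ 2 + 2 * r * σ ^ 2) := by
    rw [hδ]; field_simp; ring
  have hδ' : δ * μ ^ 2 = 2 * r * σ ^ 2 * (1 - δ) := by
    rw [h1δ, hδ]; field_simp
  have hne : σ ^ 2 * (1 - δ) ≠ 0 := by rw [h1δ]; positivity
  apply mul_left_cancel₀ hne
  linear_combination μ * δ * hrel + a * hδ'

theorem deriv2_eq_of_ode_of_eqOn_rpow {μ σ r A a δ : ℝ} {β w : ℝ → ℝ} (hμ : μ ≠ 0) (hσ : σ ≠ 0)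
    (hr : 0 < r) (ha : 0 < a) (hδ : δ = 2 * r * σ ^ 2 / (μ ^ 2 + 2 * r * σ ^ 2))
    (hβa : β a ≠ 0) (hrel : σ ^ 2 * (1 - δ) * β a = μ * a) (hβc : ContinuousAt β a)
    (hwd : DifferentiableAt ℝ w a) (hw'c : ContinuousAt (deriv w) a)
    (hw''c : ContinuousAt (deriv (deriv w)) a)
    (hode : ∀ x > a,
      μ * β x * deriv w x + σ ^ 2 * β x ^ 2 / 2 * deriv (deriv w) x - r * w x = 0)
    (hwpow : ∀ x ∈ Ioc (0:ℝ) a, w x = A * x ^ δ) :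
    deriv (deriv w) a = -(2 * r * A * a ^ δ) / (σ ^ 2 * β a ^ 2) := by
  have hwa : w a = A * a ^ δ := hwpow a ⟨ha, le_rfl⟩
  have hw'a : deriv w a = A * (δ * a ^ (δ - 1)) :=
    deriv_eq_of_hasDerivAt_of_eqOn_Ioc ha hwd
      ((Real.hasDerivAt_rpow_const (Or.inl ha.ne')).const_mul A) hwpow
  have hode_a : μ * β a * deriv w a + σ ^ 2 * β a ^ 2 / 2 * deriv (deriv w) a - r * w a = 0 :=
    ContinuousAt.eq_zero_of_forall_gt (F := fun x =>
      μ * β x * deriv w x + σ ^ 2 * β x ^ 2 / 2 * deriv (deriv w) x - r * w x)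
      (by have hwc := hwd.continuousAt; fun_prop) hode
  have hkey := drift_mul_exponent_eq hμ hσ hr hδ hrel
  have hpow : a ^ (δ - 1) * a = a ^ δ := by
    rw [Real.rpow_sub_one ha.ne', div_mul_cancel₀ _ ha.ne']
  rw [hwa, hw'a] at hode_a
  rw [eq_div_iff (by positivity)]
  apply mul_left_cancel₀ ha.ne'
  linear_combination 2 * a * hode_a - 2 * μ * β a * A * δ * hpow - 2 * A * a ^ δ * hkey

theorem exists_deriv2_eq_zero_of_monotoneOn {μ σ r a βbar : ℝ} {β w : ℝ → ℝ}
    (hμ : 0 ≤ μ) (hr : 0 < r) (hβ : ∀ x > a, β x ≤ βbar)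
    (hwd : ∀ x ≥ a, DifferentiableAt ℝ w x) (hw'd : ∀ x > a, DifferentiableAt ℝ (deriv w) x)
    (hw''c : ContinuousOn (deriv (deriv w)) (Ici a))
    (hode : ∀ x > a,
      μ * β x * deriv w x + σ ^ 2 * β x ^ 2 / 2 * deriv (deriv w) x - r * w x = 0)
    (hmono : MonotoneOn w (Ici a)) (hwa : 0 < w a) (hw''a : deriv (deriv w) a < 0) :
    ∃ b > a, deriv (deriv w) b = 0 := by
  by_contra! hne
  have hneg : ∀ x > a, deriv (deriv w) x < 0 := fun x hx =>
    neg_of_continuousOn_Icc_of_ne_zero hx.le (hw''c.mono Icc_subset_Ici_self) hw''a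
      fun c hc => hne c hc.1
  have hconc : ConcaveOn ℝ (Ici a) w := by
    refine concaveOn_of_deriv2_nonpos (convex_Ici a)
      (fun x hx => (hwd x hx).continuousAt.continuousWithinAt) ?_ ?_ ?_ <;>
      rw [interior_Ici]
    · exact fun x hx => (hwd x hx.le).differentiableWithinAt
    · exact fun x hx => (hw'd x hx).differentiableWithinAt
    · exact fun x hx => (hneg x hx).le
  set x := a + max 1 (μ * βbar / r)
  have hxa : a < x := by simp [x]
  have hdrift : μ * βbar ≤ r * (x - a) := by
    rw [← div_le_iff₀' hr]; simp [x]
  have hw'x : 0 ≤ deriv w x := by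
    have := (hmono.mono Ioi_subset_Ici_self).derivWithin_nonneg (x := x)
    rwa [derivWithin_of_isOpen isOpen_Ioi hxa] at this
  have htangent : deriv w x * (x - a) ≤ w x - w a := by
    have := hconc.deriv_le_slope self_mem_Ici hxa.le hxa (hwd x hxa.le)
    rwa [slope_def_field, le_div_iff₀ (sub_pos.2 hxa)] at this
  have hforce : 0 < r * w x - μ * β x * deriv w x :=
    calc 0 < r * w a := by positivity
      _ ≤ r * w a + deriv w x * (r * (x - a) - μ * βbar) :=
        le_add_of_nonneg_right (mul_nonneg hw'x (sub_nonneg.2 hdrift))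
      _ ≤ r * w x - μ * βbar * deriv w x := by nlinarith [htangent]
      _ ≤ r * w x - μ * β x * deriv w x := by gcongr; exact hβ x hxa
  have hdiffusion : σ ^ 2 * β x ^ 2 / 2 * deriv (deriv w) x ≤ 0 :=
    mul_nonpos_of_nonneg_of_nonpos (by positivity) (hneg x hxa).le
  linarith [hode x hxa]

theorem stmt_18 (μ σ r A a βbar : ℝ) (hσ : 0 < σ) (hr : 0 < r) (hμr : r < μ)
    (hA : 0 < A) (ha : 0 < a)
    (δ : ℝ) (hδ : δ = 2 * r * σ ^ 2 / (μ ^ 2 + 2 * r * σ ^ 2))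
    (β : ℝ → ℝ) (hβmono : MonotoneOn β (Ici 0)) (hβconc : ConcaveOn ℝ (Ici 0) β)
    (hβpos : ∀ x > (0:ℝ), 0 < β x) (hβlim : Tendsto β atTop (nhds βbar))
    (hrel : σ ^ 2 * (1 - δ) * β a = μ * a)
    (w : ℝ → ℝ) (hw : ContDiffOn ℝ 2 w (Ioi 0))
    (hode : ∀ x > a,
      μ * β x * deriv w x + σ ^ 2 * β x ^ 2 / 2 * deriv (deriv w) x - r * w x = 0)
    (hwpow : ∀ x ∈ Ioc (0:ℝ) a, w x = A * x ^ δ)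
    (hmono : MonotoneOn w (Ici a)) :
    deriv (deriv w) a = -(2 * r * A * a ^ δ) / (σ ^ 2 * β a ^ 2) ∧
    deriv (deriv w) a < 0 ∧
    (∃ b > a, deriv (deriv w) b = 0) ∧
    (∀ x ∈ Ioo a (sInf {x : ℝ | a ≤ x ∧ deriv (deriv w) x = 0}),
      deriv (deriv w) x < 0) := by
  have hμ : 0 < μ := hr.trans hμr
  have hw' : ContDiffOn ℝ 1 (deriv w) (Ioi 0) := hw.deriv_of_isOpen isOpen_Ioi (by norm_num)
  have hwd : ∀ x > 0, DifferentiableAt ℝ w x := fun x hx =>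
    (hw.differentiableOn (by norm_num)).differentiableAt (isOpen_Ioi.mem_nhds hx)
  have hw'd : ∀ x > 0, DifferentiableAt ℝ (deriv w) x := fun x hx =>
    (hw'.differentiableOn one_ne_zero).differentiableAt (isOpen_Ioi.mem_nhds hx)
  have hw''c : ContinuousOn (deriv (deriv w)) (Ioi 0) :=
    hw'.continuousOn_deriv_of_isOpen isOpen_Ioi le_rfl
  have hw''c_Ici : ContinuousOn (deriv (deriv w)) (Ici a) := hw''c.mono fun x hx => ha.trans_le hx
  have hβc : ContinuousAt β a :=
    (interior_Ici (a := (0 : ℝ)) ▸ hβconc.continuousOn_interior).continuousAt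
      (isOpen_Ioi.mem_nhds ha)
  have hw''a : deriv (deriv w) a = -(2 * r * A * a ^ δ) / (σ ^ 2 * β a ^ 2) :=
    deriv2_eq_of_ode_of_eqOn_rpow hμ.ne' hσ.ne' hr ha hδ (hβpos a ha).ne' hrel hβc (hwd a ha)
      (hw'd a ha).continuousAt (hw''c.continuousAt (isOpen_Ioi.mem_nhds ha)) hode hwpow
  have hw''a_neg : deriv (deriv w) a < 0 := by
    have hβa := hβpos a ha
    rw [hw''a]
    exact div_neg_of_neg_of_pos (neg_neg_of_pos (by positivity)) (by positivity)
  have hβle : ∀ x > a, β x ≤ βbar := fun x hx => hβmono.le_of_tendsto_atTop hβlim (ha.trans hx).le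
  refine ⟨hw''a, hw''a_neg, ?_, neg_of_lt_sInf_zeros hw''c_Ici hw''a_neg⟩
  refine exists_deriv2_eq_zero_of_monotoneOn hμ.le hr hβle (fun x hx => hwd x (ha.trans_le hx))
    (fun x hx => hw'd x (ha.trans hx)) hw''c_Ici hode hmono ?_ hw''a_neg
  rw [hwpow a ⟨ha, le_rfl⟩]
  positivity
end
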